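/- arXiv:1401.2580 — 8 statements merged into one kernel-verified Lean document; each statement's English description precedes it below -/
import Mathlib

section
/- In any chain M and point t, the TL(U,S) formula K⁻(F), defined as ¬((¬F) S True), holds at t if and only if t = sup{t' : t' < t and F holds at t'} (i.e., t is an upper bound of this set and no smaller element is an upper bound, the set being nonempty and t being its least upper bound). -/
/-- Syntax of the temporal logic TL(U,S) with strict Until and strict Since. -/
inductive TL (σ : Type) : Type
  | tt : TL σ
  | atom : σ → TL σ
  | neg : TL σ → TL σ
  | or : TL σ → TL σ → TL σ
  | and : TL σ → TL σ → TL σ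
  | until_ : TL σ → TL σ → TL σ
  | since : TL σ → TL σ → TL σ

/-- Semantics of TL(U,S) over a chain: a linear order `T` with interpretation `I`. -/
def TL.sat {σ T : Type} [LinearOrder T] (I : σ → Set T) : TL σ → T → Prop
  | .tt, _ => True
  | .atom p, t => t ∈ I p
  | .neg F, t => ¬ TL.sat I F t
  | .or F G, t => TL.sat I F t ∨ TL.sat I G t
  | .and F G, t => TL.sat I F t ∧ TL.sat I G t
  | .until_ F G, t => ∃ t', t < t' ∧ TL.sat I G t' ∧ ∀ s, t < s → s < t' → TL.sat I F s
  | .since F G, t => ∃ t', t' < t ∧ TL.sat I G t' ∧ ∀ s, t' < s → s < t → TL.sat I F s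

/-- K⁻(F) := ¬((¬F) S True). -/
def TL.kminus {σ : Type} (F : TL σ) : TL σ := .neg (.since (.neg F) .tt)

/-- K⁺(F) := ¬((¬F) U True). -/
def TL.kplus {σ : Type} (F : TL σ) : TL σ := .neg (.until_ (.neg F) .tt)

/-- G F := ¬(True U ¬F): F holds everywhere strictly after the current point. -/
def TL.G {σ : Type} (F : TL σ) : TL σ := .neg (.until_ .tt (.neg F))

/-- G⁻ F := ¬(True S ¬F): F holds everywhere strictly before the current point. -/
def TL.Gm {σ : Type} (F : TL σ) : TL σ := .neg (.since .tt (.neg F))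

/-- Syntax of FOMLO: first-order monadic logic of order (variables are natural numbers). -/
inductive FO (σ : Type) : Type
  | lt : ℕ → ℕ → FO σ
  | eq : ℕ → ℕ → FO σ
  | atom : σ → ℕ → FO σ
  | neg : FO σ → FO σ
  | or : FO σ → FO σ → FO σ
  | and : FO σ → FO σ → FO σ
  | ex : ℕ → FO σ → FO σ
  | all : ℕ → FO σ → FO σ

/-- Semantics of FOMLO over a chain, with a valuation of the variables. -/
def FO.sat {σ T : Type} [LinearOrder T] (I : σ → Set T) : FO σ → (ℕ → T) → Prop
  | .lt i j, v => v i < v j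
  | .eq i j, v => v i = v j
  | .atom p i, v => v i ∈ I p
  | .neg φ, v => ¬ FO.sat I φ v
  | .or φ ψ, v => FO.sat I φ v ∨ FO.sat I ψ v
  | .and φ ψ, v => FO.sat I φ v ∧ FO.sat I ψ v
  | .ex i φ, v => ∃ t, FO.sat I φ (Function.update v i t)
  | .all i φ, v => ∀ t, FO.sat I φ (Function.update v i t)

/-- Free variables of a FOMLO formula. -/
def FO.freeVars {σ : Type} : FO σ → Set ℕ
  | .lt i j => {i, j}
  | .eq i j => {i, j}
  | .atom _ i => {i}
  | .neg φ => φ.freeVars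
  | .or φ ψ => φ.freeVars ∪ ψ.freeVars
  | .and φ ψ => φ.freeVars ∪ ψ.freeVars
  | .ex i φ => φ.freeVars \ {i}
  | .all i φ => φ.freeVars \ {i}

/-- Quantifier-free one-variable (propositional) formulas over the monadic predicates. -/
inductive QF (σ : Type) : Type
  | tt : QF σ
  | atom : σ → QF σ
  | neg : QF σ → QF σ
  | or : QF σ → QF σ → QF σ
  | and : QF σ → QF σ → QF σ

def QF.sat {σ T : Type} (I : σ → Set T) : QF σ → T → Prop
  | .tt, _ => True
  | .atom p, t => t ∈ I p
  | .neg φ, t => ¬ QF.sat I φ t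
  | .or φ ψ, t => QF.sat I φ t ∨ QF.sat I ψ t
  | .and φ ψ, t => QF.sat I φ t ∧ QF.sat I ψ t

/-- The propositional temporal formula corresponding to a quantifier-free formula. -/
def QF.toTL {σ : Type} : QF σ → TL σ
  | .tt => .tt
  | .atom p => .atom p
  | .neg φ => .neg φ.toTL
  | .or φ ψ => .or φ.toTL ψ.toTL
  | .and φ ψ => .and φ.toTL ψ.toTL

/-- An ∃∀-formula over the monadic signature `σ` with free variables `z₀,…,z_m`:
`∃ x_n … x₀, (⋀_k z_k = x_{idx k}) ∧ x₀ < … < x_n ∧ ⋀_j α_j(x_j) ∧`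
each `βmid j` holds throughout the open interval `(x_j, x_{j+1})`,
`βhi` holds everywhere after `x_n`, and `βlo` holds everywhere before `x₀`. -/
structure EAForm (σ : Type) (m : ℕ) where
  n : ℕ
  idx : Fin (m + 1) → Fin (n + 1)
  α : Fin (n + 1) → QF σ
  βmid : Fin n → QF σ
  βlo : QF σ
  βhi : QF σ

/-- Semantics of ∃∀-formulas. -/
def EAForm.sat {σ : Type} {m : ℕ} {T : Type} [LinearOrder T] (e : EAForm σ m)
    (I : σ → Set T) (z : Fin (m + 1) → T) : Prop :=
  ∃ x : Fin (e.n + 1) → T, StrictMono x ∧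
    (∀ k, z k = x (e.idx k)) ∧
    (∀ j, (e.α j).sat I (x j)) ∧
    (∀ j : Fin e.n, ∀ y, x j.castSucc < y → y < x j.succ → (e.βmid j).sat I y) ∧
    (∀ y, y < x 0 → e.βlo.sat I y) ∧
    (∀ y, x (Fin.last e.n) < y → e.βhi.sat I y)

/-- Satisfaction of a disjunction of ∃∀-formulas. -/
def EADisj {σ : Type} {m : ℕ} {T : Type} [LinearOrder T] (L : List (EAForm σ m))
    (I : σ → Set T) (z : Fin (m + 1) → T) : Prop :=
  ∃ f ∈ L, f.sat I z

/-- A linear order is Dedekind complete if every nonempty bounded-above subset has a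
least upper bound and every nonempty bounded-below subset has a greatest lower bound. -/
def DedekindComplete (T : Type) [LinearOrder T] : Prop :=
  (∀ S : Set T, S.Nonempty → BddAbove S → ∃ a, IsLUB S a) ∧
  (∀ S : Set T, S.Nonempty → BddBelow S → ∃ a, IsGLB S a)

/-- The canonical TL(U,S)-expansion of a chain: one unary predicate for each
TL(U,S)-formula `A`, interpreted as the set of points satisfying `A`. -/
def canonExp {σ T : Type} [LinearOrder T] (I : σ → Set T) : TL σ → Set T :=
  fun A => {t | A.sat I t}

/-- `[α₀,β₁,α₁,…,β_n,α_n](z₀,z₁)` : there are `z₀ = x₀ < x₁ < … < x_n = z₁` with each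
`a j` holding at `x_j` and `b j` holding throughout `(x_j, x_{j+1})`
(`b j` stands for `β_{j+1}`). -/
def chainSat {σ T : Type} [LinearOrder T] (I : σ → Set T) (n : ℕ) (a b : ℕ → QF σ)
    (z₀ z₁ : T) : Prop :=
  ∃ x : Fin (n + 1) → T, x 0 = z₀ ∧ x (Fin.last n) = z₁ ∧ StrictMono x ∧
    (∀ j : Fin (n + 1), (a j.val).sat I (x j)) ∧
    (∀ j : Fin n, ∀ y, x j.castSucc < y → y < x j.succ → (b j.val).sat I y)

/-- `nestU [(B₁,A₁),…,(B_k,A_k)] tail = B₁ U (A₁ ∧ (B₂ U (A₂ ∧ … (B_k U (A_k ∧ tail))…)))`. -/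
def nestU {σ : Type} : List (TL σ × TL σ) → TL σ → TL σ
  | [], tail => tail
  | (B, A) :: rest, tail => B.until_ (A.and (nestU rest tail))

/-- `nestS [(B₁,A₁),…,(B_k,A_k)] tail = B₁ S (A₁ ∧ (B₂ S (A₂ ∧ … (B_k S (A_k ∧ tail))…)))`. -/
def nestS {σ : Type} : List (TL σ × TL σ) → TL σ → TL σ
  | [], tail => tail
  | (B, A) :: rest, tail => B.since (A.and (nestS rest tail))

/-- `α_i` as a temporal formula, extended by `True` out of range. -/
def EAForm.aExt {σ : Type} {m : ℕ} (e : EAForm σ m) (i : ℕ) : TL σ :=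
  if h : i < e.n + 1 then (e.α ⟨i, h⟩).toTL else .tt

/-- `β_{i+1}` (interval `(x_i, x_{i+1})`) as a temporal formula, `True` out of range. -/
def EAForm.bExt {σ : Type} {m : ℕ} (e : EAForm σ m) (i : ℕ) : TL σ :=
  if h : i < e.n then (e.βmid ⟨i, h⟩).toTL else .tt

/-- The future part `A_k ∧ (B_{k+1} U (A_{k+1} ∧ … (A_n ∧ G B_{n+1})…))` of the
translation of a one-free-variable ∃∀-formula (with `z₀ = x_k`). -/
def EAForm.futureTL {σ : Type} (e : EAForm σ 0) : TL σ :=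
  (e.aExt (e.idx 0).val).and
    (nestU (List.ofFn (fun j : Fin (e.n - (e.idx 0).val) =>
        (e.bExt ((e.idx 0).val + j.val), e.aExt ((e.idx 0).val + j.val + 1))))
      e.βhi.toTL.G)

/-- The past part `A_k ∧ (B_k S (A_{k-1} ∧ … (A₀ ∧ G⁻ B₀)…))` of the translation. -/
def EAForm.pastTL {σ : Type} (e : EAForm σ 0) : TL σ :=
  (e.aExt (e.idx 0).val).and
    (nestS (List.ofFn (fun j : Fin (e.idx 0).val =>
        (e.bExt ((e.idx 0).val - 1 - j.val), e.aExt ((e.idx 0).val - 1 - j.val))))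
      e.βlo.toTL.Gm)

/-- `Fseq a b n j` is the temporal formula `F_{n-j}` where `F_n := α_n` and
`F_{i-1} := α_{i-1} ∧ (β_i U F_i)`; here `b i` stands for `β_{i+1}`. -/
def Fseq {σ : Type} (a b : ℕ → QF σ) (n : ℕ) : ℕ → TL σ
  | 0 => (a n).toTL
  | j + 1 => ((a (n - j - 1)).toTL).and (((b (n - j - 1)).toTL).until_ (Fseq a b n j))

/-- Syntax of the temporal logic TL(U,K⁻) with strict Until and the modality K⁻. -/
inductive TLK (σ : Type) : Type
  | tt : TLK σ
  | atom : σ → TLK σ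
  | neg : TLK σ → TLK σ
  | or : TLK σ → TLK σ → TLK σ
  | and : TLK σ → TLK σ → TLK σ
  | until_ : TLK σ → TLK σ → TLK σ
  | kminus : TLK σ → TLK σ

/-- Semantics of TL(U,K⁻): `K⁻(F)` holds at `t` iff `t = sup{t' < t : F(t')}`. -/
def TLK.sat {σ T : Type} [LinearOrder T] (I : σ → Set T) : TLK σ → T → Prop
  | .tt, _ => True
  | .atom p, t => t ∈ I p
  | .neg F, t => ¬ TLK.sat I F t
  | .or F G, t => TLK.sat I F t ∨ TLK.sat I G t
  | .and F G, t => TLK.sat I F t ∧ TLK.sat I G t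
  | .until_ F G, t => ∃ t', t < t' ∧ TLK.sat I G t' ∧ ∀ s, t < s → s < t' → TLK.sat I F s
  | .kminus F, t => IsLUB {t' | t' < t ∧ TLK.sat I F t'} t

/-- Syntactically future TL(U,K⁻) formulas: Boolean combinations of atoms and
Until-formulas. -/
inductive SynFuture {σ : Type} : TLK σ → Prop
  | tt : SynFuture .tt
  | atom (p : σ) : SynFuture (.atom p)
  | until_ (F G : TLK σ) : SynFuture (.until_ F G)
  | neg {F} : SynFuture F → SynFuture (.neg F)
  | or {F G} : SynFuture F → SynFuture G → SynFuture (.or F G)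
  | and {F G} : SynFuture F → SynFuture G → SynFuture (.and F G)

/-- The subchain of a chain restricted to `[t₀,∞)`: the interpretation induced on the
subtype `{t // t₀ ≤ t}`. -/
def restrictI {σ T : Type} (I : σ → Set T) [LinearOrder T] (t₀ : T) :
    σ → Set {t : T // t₀ ≤ t} :=
  fun p => {s | s.val ∈ I p}

/-- A (z₀,z₁)-∃∀ formula: either `z₀ > z₁`, or `z₀ = z₁`, or a formula
`[α₀,β₁,…,β_n,α_n](z₀,z₁)`. -/
inductive IntervalEA (σ : Type) : Type
  | gt : IntervalEA σ
  | eq : IntervalEA σ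
  | chain (n : ℕ) (a b : ℕ → QF σ) : IntervalEA σ

def IntervalEA.sat {σ T : Type} [LinearOrder T] (I : σ → Set T) :
    IntervalEA σ → T → T → Prop
  | .gt, z₀, z₁ => z₁ < z₀
  | .eq, z₀, z₁ => z₀ = z₁
  | .chain n a b, z₀, z₁ => chainSat I n a b z₀ z₁

/-- K⁻(F) holds at t iff t = sup{t' < t : F holds at t'}. -/
theorem kminus_iff_isLUB (σ T : Type) [LinearOrder T] (I : σ → Set T) (F : TL σ) (t : T) :
    F.kminus.sat I t ↔ IsLUB {t' | t' < t ∧ F.sat I t'} t := by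
  simp only [TL.kminus, TL.sat]
  constructor
  · intro h
    constructor
    · intro s hs; exact le_of_lt hs.1
    · intro b hb
      by_contra hbt
      push_neg at hbt
      exact h ⟨b, hbt, trivial, fun s hbs hst hF => absurd (hb ⟨hst, hF⟩) (not_le.mpr hbs)⟩
  · rintro ⟨_, hlb⟩ ⟨t', ht't, _, hall⟩
    have : ∀ s ∈ {t' | t' < t ∧ TL.sat I F t'}, s ≤ t' := by
      intro s ⟨hst, hFs⟩
      by_contra hs
      exact hall s (not_le.mp hs) hst hFs
    exact absurd (hlb this) (not_le.mpr ht't)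
end

section
/- The conjunction of two ∃∀-formulas is equivalent (over all chains) to a disjunction of ∃∀-formulas. -/
namespace EAConj

/-- Conjunction of a list of quantifier-free formulas. -/
def qfListAnd {σ : Type} : List (QF σ) → QF σ
  | [] => .tt
  | φ :: l => φ.and (qfListAnd l)

lemma qfListAnd_sat {σ T : Type} (I : σ → Set T) (l : List (QF σ)) (t : T) :
    (qfListAnd l).sat I t ↔ ∀ φ ∈ l, φ.sat I t := by
  induction l with
  | nil => simp [qfListAnd, QF.sat]
  | cons φ l ih => simp [qfListAnd, QF.sat, ih]

/-- Region formula of `e` indexed by `c`, the number of points of `e` (weakly) before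
the location: `βlo` if `c = 0`, `βmid (c-1)` if `0 < c ≤ n`, `βhi` if `c = n+1`. -/
def region {σ : Type} {m : ℕ} (e : EAForm σ m) (c : ℕ) : QF σ :=
  if c = 0 then e.βlo else if h : c - 1 < e.n then e.βmid ⟨c - 1, h⟩ else e.βhi

lemma region_zero {σ : Type} {m : ℕ} (e : EAForm σ m) : region e 0 = e.βlo := by
  simp [region]

lemma region_mid {σ : Type} {m : ℕ} (e : EAForm σ m) (i : ℕ) (h : i < e.n) :
    region e (i + 1) = e.βmid ⟨i, h⟩ := by
  simp [region, h]

lemma region_top {σ : Type} {m : ℕ} (e : EAForm σ m) : region e (e.n + 1) = e.βhi := by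
  simp [region]

/-- Number of points of `f` strictly before position `j`. -/
def cPt {k n : ℕ} (f : Fin k → Fin (n + 1)) (j : Fin (n + 1)) : ℕ :=
  (Finset.univ.filter (fun i => f i < j)).card

/-- Number of points of `f` weakly before position `j.castSucc`. -/
def cIv {k n : ℕ} (f : Fin k → Fin (n + 1)) (j : Fin n) : ℕ :=
  (Finset.univ.filter (fun i => f i ≤ j.castSucc)).card

lemma card_filter_iff {k : ℕ} (p : Fin k → Prop) [DecidablePred p] {c : ℕ} (hc : c ≤ k)
    (h : ∀ i : Fin k, p i ↔ i.val < c) :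
    (Finset.univ.filter p).card = c := by
  apply Finset.card_eq_of_bijective (fun i hi => (⟨i, lt_of_lt_of_le hi hc⟩ : Fin k))
  · intro a ha
    rw [Finset.mem_filter] at ha
    exact ⟨a.val, (h a).mp ha.2, Fin.ext rfl⟩
  · intro i hi
    rw [Finset.mem_filter]
    exact ⟨Finset.mem_univ _, (h _).mpr hi⟩
  · intro i j hi hj hij
    exact congrArg Fin.val hij

lemma cPt_eq {k n : ℕ} (f : Fin k → Fin (n + 1)) (j : Fin (n + 1)) {c : ℕ} (hc : c ≤ k)
    (h : ∀ i : Fin k, f i < j ↔ i.val < c) : cPt f j = c :=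
  card_filter_iff _ hc h

lemma cIv_eq {k n : ℕ} (f : Fin k → Fin (n + 1)) (j : Fin n) {c : ℕ} (hc : c ≤ k)
    (h : ∀ i : Fin k, f i ≤ j.castSucc ↔ i.val < c) : cIv f j = c :=
  card_filter_iff _ hc h

/-- The constraint that `e` imposes at merged point `j` under the embedding `f`. -/
def regPt {σ : Type} {m : ℕ} (e : EAForm σ m) {n : ℕ}
    (f : Fin (e.n + 1) → Fin (n + 1)) (j : Fin (n + 1)) : QF σ :=
  (qfListAnd ((List.finRange (e.n + 1)).map (fun i => if f i = j then e.α i else .tt))).and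
    (if ∀ i, f i ≠ j then region e (cPt f j) else .tt)

/-- The constraint that `e` imposes on merged interval `(j, j+1)` under `f`. -/
def regIv {σ : Type} {m : ℕ} (e : EAForm σ m) {n : ℕ}
    (f : Fin (e.n + 1) → Fin (n + 1)) (j : Fin n) : QF σ :=
  region e (cIv f j)

lemma regPt_sat {σ T : Type} (I : σ → Set T) {m : ℕ} (e : EAForm σ m) {n : ℕ}
    (f : Fin (e.n + 1) → Fin (n + 1)) (j : Fin (n + 1)) (t : T) :
    (regPt e f j).sat I t ↔
      ((∀ i, f i = j → (e.α i).sat I t) ∧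
        ((∀ i, f i ≠ j) → (region e (cPt f j)).sat I t)) := by
  unfold regPt
  rw [show ∀ a b : QF σ, (QF.and a b).sat I t ↔ a.sat I t ∧ b.sat I t from fun _ _ => Iff.rfl]
  rw [qfListAnd_sat]
  constructor
  · rintro ⟨h1, h2⟩
    refine ⟨fun i hi => ?_, fun hne => ?_⟩
    · have := h1 (if f i = j then e.α i else .tt)
        (List.mem_map.mpr ⟨i, List.mem_finRange i, rfl⟩)
      simpa [hi] using this
    · rwa [if_pos hne] at h2
  · rintro ⟨h1, h2⟩
    constructor
    · intro φ hφ
      obtain ⟨i, -, rfl⟩ := List.mem_map.mp hφ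
      by_cases hi : f i = j
      · simpa [hi] using h1 i hi
      · simp [hi, QF.sat]
    · split_ifs with h
      · exact h2 h
      · trivial

/-- The merged ∃∀-formula from an interleaving pattern `(n, f₁, f₂)`. -/
def mergeForm {σ : Type} {m : ℕ} (e₁ e₂ : EAForm σ m) (n : ℕ)
    (f₁ : Fin (e₁.n + 1) → Fin (n + 1)) (f₂ : Fin (e₂.n + 1) → Fin (n + 1)) :
    EAForm σ m where
  n := n
  idx k := f₁ (e₁.idx k)
  α j := (regPt e₁ f₁ j).and (regPt e₂ f₂ j)
  βmid j := (regIv e₁ f₁ j).and (regIv e₂ f₂ j)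
  βlo := e₁.βlo.and e₂.βlo
  βhi := e₁.βhi.and e₂.βhi

/-- Locating a point relative to a strictly monotone finite sequence. -/
lemma locate {T : Type} [LinearOrder T] {n : ℕ} (w : Fin (n + 1) → T)
    (hw : StrictMono w) (y : T) :
    (∃ j, y = w j) ∨ (∃ j : Fin n, w j.castSucc < y ∧ y < w j.succ) ∨
      y < w 0 ∨ w (Fin.last n) < y := by
  classical
  by_cases he : ∃ j, y = w j
  · exact Or.inl he
  push_neg at he
  right
  set A : Finset (Fin (n + 1)) := Finset.univ.filter (fun j => w j < y) with hA
  by_cases hne : A.Nonempty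
  · have hj₀ : w (A.max' hne) < y := (Finset.mem_filter.mp (A.max'_mem hne)).2
    by_cases hlast : A.max' hne = Fin.last n
    · right; right; rwa [hlast] at hj₀
    · left
      have hv : (A.max' hne).val < n := by
        rcases lt_or_eq_of_le (Nat.lt_succ_iff.mp (A.max' hne).isLt) with h | h
        · exact h
        · exact absurd (Fin.ext h) hlast
      refine ⟨⟨(A.max' hne).val, hv⟩, ?_, ?_⟩
      · exact lt_of_eq_of_lt (congrArg w (Fin.ext rfl)) hj₀
      · have hj₁ : (⟨(A.max' hne).val, hv⟩ : Fin n).succ ∉ A := by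
          intro hmem
          have h2 := Fin.le_def.mp (A.le_max' _ hmem)
          simp only [Fin.val_succ] at h2
          omega
        rw [Finset.mem_filter] at hj₁
        push_neg at hj₁
        exact lt_of_le_of_ne (hj₁ (Finset.mem_univ _)) (he _)
  · right; left
    rw [Finset.not_nonempty_iff_eq_empty] at hne
    have h0 : (0 : Fin (n + 1)) ∉ A := by rw [hne]; exact Finset.notMem_empty _
    rw [Finset.mem_filter] at h0
    push_neg at h0
    exact lt_of_le_of_ne (h0 (Finset.mem_univ _)) (he _)


section Halves

variable {σ T : Type} [LinearOrder T]

/-- Soundness: satisfaction of the merged constraints along `w` yields the constraints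
of `e` along `w ∘ f`. -/
lemma sound_half (I : σ → Set T) {m : ℕ} (e : EAForm σ m) {n : ℕ}
    {f : Fin (e.n + 1) → Fin (n + 1)} (hf : StrictMono f)
    {w : Fin (n + 1) → T} (hw : StrictMono w)
    (hpt : ∀ j, (regPt e f j).sat I (w j))
    (hiv : ∀ (j : Fin n) (y : T), w j.castSucc < y → y < w j.succ → (regIv e f j).sat I y)
    (hlo : ∀ y, y < w 0 → e.βlo.sat I y)
    (hhi : ∀ y, w (Fin.last n) < y → e.βhi.sat I y) :
    (∀ i, (e.α i).sat I (w (f i))) ∧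
    (∀ (i : Fin e.n) (y : T), w (f i.castSucc) < y → y < w (f i.succ) → (e.βmid i).sat I y) ∧
    (∀ y, y < w (f 0) → e.βlo.sat I y) ∧
    (∀ y, w (f (Fin.last e.n)) < y → e.βhi.sat I y) := by
  refine ⟨fun i => ((regPt_sat I e f (f i) (w (f i))).mp (hpt (f i))).1 i rfl, ?_, ?_, ?_⟩
  · -- βmid
    intro i y h1 h2
    rcases locate w hw y with ⟨j, rfl⟩ | ⟨j, hy1, hy2⟩ | hy | hy
    · have hj1 : f i.castSucc < j := hw.lt_iff_lt.mp h1
      have hj2 : j < f i.succ := hw.lt_iff_lt.mp h2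
      have hne : ∀ i', f i' ≠ j := by
        intro i' h'
        have a1 := Fin.lt_def.mp (hf.lt_iff_lt.mp (h' ▸ hj1))
        have a2 := Fin.lt_def.mp (hf.lt_iff_lt.mp (h' ▸ hj2))
        simp only [Fin.coe_castSucc, Fin.val_succ] at a1 a2
        omega
      have hc : cPt f j = i.val + 1 := by
        refine cPt_eq f j (by omega) fun i'' => ⟨fun h' => ?_, fun h' => ?_⟩
        · by_contra hcon
          push_neg at hcon
          have hs : i.succ ≤ i'' := Fin.le_def.mpr (by simp only [Fin.val_succ]; omega)
          exact absurd (lt_trans (lt_of_lt_of_le hj2 (hf.monotone hs)) h') (lt_irrefl j)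
        · have hs : i'' ≤ i.castSucc :=
            Fin.le_def.mpr (by simp only [Fin.coe_castSucc]; omega)
          exact lt_of_le_of_lt (hf.monotone hs) hj1
      have := ((regPt_sat I e f j (w j)).mp (hpt j)).2 hne
      rw [hc, region_mid e i.val i.isLt] at this
      simpa using this
    · have hle1 : f i.castSucc ≤ j.castSucc := by
        by_contra hcon
        push_neg at hcon
        have hs : j.succ ≤ f i.castSucc := Fin.le_def.mpr (by
          have := Fin.lt_def.mp hcon
          simp only [Fin.coe_castSucc, Fin.val_succ] at *
          omega)
        exact absurd h1 (lt_asymm (lt_of_lt_of_le hy2 (hw.monotone hs)))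
      have hle2 : j.succ ≤ f i.succ := by
        by_contra hcon
        push_neg at hcon
        have hs : f i.succ ≤ j.castSucc := Fin.le_def.mpr (by
          have := Fin.lt_def.mp hcon
          simp only [Fin.coe_castSucc, Fin.val_succ] at *
          omega)
        exact absurd h2 (lt_asymm (lt_of_le_of_lt (hw.monotone hs) hy1))
      have hc : cIv f j = i.val + 1 := by
        refine cIv_eq f j (by omega) fun i'' => ⟨fun h' => ?_, fun h' => ?_⟩
        · by_contra hcon
          push_neg at hcon
          have hs : i.succ ≤ i'' := Fin.le_def.mpr (by simp only [Fin.val_succ]; omega)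
          have a := Fin.le_def.mp h'
          have b := Fin.le_def.mp (le_trans hle2 (hf.monotone hs))
          simp only [Fin.coe_castSucc, Fin.val_succ] at a b
          omega
        · have hs : i'' ≤ i.castSucc :=
            Fin.le_def.mpr (by simp only [Fin.coe_castSucc]; omega)
          exact le_trans (hf.monotone hs) hle1
      have := hiv j y hy1 hy2
      unfold regIv at this
      rw [hc, region_mid e i.val i.isLt] at this
      simpa using this
    · exact absurd h1 (lt_asymm (lt_of_lt_of_le hy (hw.monotone (Fin.zero_le _))))
    · exact absurd hy (lt_asymm (lt_of_lt_of_le h2 (hw.monotone (Fin.le_last _))))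
  · -- βlo
    intro y hy
    rcases locate w hw y with ⟨j, rfl⟩ | ⟨j, hy1, hy2⟩ | hy' | hy'
    · have hj : j < f 0 := hw.lt_iff_lt.mp hy
      have hne : ∀ i', f i' ≠ j := by
        intro i' h'
        have := hf.monotone (Fin.zero_le i')
        rw [h'] at this
        exact absurd (lt_of_le_of_lt this hj) (lt_irrefl _)
      have hc : cPt f j = 0 := by
        refine cPt_eq f j (Nat.zero_le _) fun i'' => ⟨fun h' => ?_, fun h' => ?_⟩
        · exact absurd (lt_of_le_of_lt (hf.monotone (Fin.zero_le i'')) h') (lt_asymm hj)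
        · exact (Nat.not_lt_zero _ h').elim
      have := ((regPt_sat I e f j (w j)).mp (hpt j)).2 hne
      rwa [hc, region_zero] at this
    · have hle : j.succ ≤ f 0 := by
        by_contra hcon
        push_neg at hcon
        have hs : f 0 ≤ j.castSucc := Fin.le_def.mpr (by
          have := Fin.lt_def.mp hcon
          simp only [Fin.coe_castSucc, Fin.val_succ] at *
          omega)
        exact absurd hy (lt_asymm (lt_of_le_of_lt (hw.monotone hs) hy1))
      have hc : cIv f j = 0 := by
        refine cIv_eq f j (Nat.zero_le _) fun i'' => ⟨fun h' => ?_, fun h' => ?_⟩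
        · have a := Fin.le_def.mp h'
          have b := Fin.le_def.mp (le_trans hle (hf.monotone (Fin.zero_le i'')))
          simp only [Fin.coe_castSucc, Fin.val_succ] at a b
          omega
        · exact (Nat.not_lt_zero _ h').elim
      have := hiv j y hy1 hy2
      unfold regIv at this
      rwa [hc, region_zero] at this
    · exact hlo y hy'
    · exact absurd hy (lt_asymm (lt_of_le_of_lt (hw.monotone (Fin.le_last (f 0))) hy'))
  · -- βhi
    intro y hy
    rcases locate w hw y with ⟨j, rfl⟩ | ⟨j, hy1, hy2⟩ | hy' | hy'
    · have hj : f (Fin.last e.n) < j := hw.lt_iff_lt.mp hy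
      have hne : ∀ i', f i' ≠ j := by
        intro i' h'
        have := hf.monotone (Fin.le_last i')
        rw [h'] at this
        exact absurd (lt_of_le_of_lt this hj) (lt_irrefl _)
      have hc : cPt f j = e.n + 1 := by
        refine cPt_eq f j le_rfl fun i'' => ⟨fun _ => i''.isLt, fun _ => ?_⟩
        exact lt_of_le_of_lt (hf.monotone (Fin.le_last i'')) hj
      have := ((regPt_sat I e f j (w j)).mp (hpt j)).2 hne
      rwa [hc, region_top] at this
    · have hle : f (Fin.last e.n) ≤ j.castSucc := by
        by_contra hcon
        push_neg at hcon
        have hs : j.succ ≤ f (Fin.last e.n) := Fin.le_def.mpr (by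
          have := Fin.lt_def.mp hcon
          simp only [Fin.coe_castSucc, Fin.val_succ] at *
          omega)
        exact absurd hy (lt_asymm (lt_of_lt_of_le hy2 (hw.monotone hs)))
      have hc : cIv f j = e.n + 1 := by
        refine cIv_eq f j le_rfl fun i'' => ⟨fun _ => i''.isLt, fun _ => ?_⟩
        exact le_trans (hf.monotone (Fin.le_last i'')) hle
      have := hiv j y hy1 hy2
      unfold regIv at this
      rwa [hc, region_top] at this
    · exact absurd hy (lt_asymm (lt_of_lt_of_le hy' (hw.monotone (Fin.zero_le _))))
    · exact hhi y hy'

/-- Completeness: the constraints of `e` along `w ∘ f` yield the merged constraints. -/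
lemma complete_half (I : σ → Set T) {m : ℕ} (e : EAForm σ m) {n : ℕ}
    {f : Fin (e.n + 1) → Fin (n + 1)} (hf : StrictMono f)
    {w : Fin (n + 1) → T} (hw : StrictMono w)
    (hα : ∀ i, (e.α i).sat I (w (f i)))
    (hβ : ∀ (i : Fin e.n) (y : T), w (f i.castSucc) < y → y < w (f i.succ) → (e.βmid i).sat I y)
    (hβlo : ∀ y, y < w (f 0) → e.βlo.sat I y)
    (hβhi : ∀ y, w (f (Fin.last e.n)) < y → e.βhi.sat I y) :
    (∀ j, (regPt e f j).sat I (w j)) ∧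
    (∀ (j : Fin n) (y : T), w j.castSucc < y → y < w j.succ → (regIv e f j).sat I y) := by
  classical
  constructor
  · intro j
    rw [regPt_sat]
    refine ⟨fun i hi => hi ▸ hα i, fun hne => ?_⟩
    by_cases hA : ∀ i, j < f i
    · have hc : cPt f j = 0 := by
        refine cPt_eq f j (Nat.zero_le _) fun i'' => ⟨fun h' => ?_, fun h' => ?_⟩
        · exact absurd (lt_trans h' (hA i'')) (lt_irrefl _)
        · exact (Nat.not_lt_zero _ h').elim
      rw [hc, region_zero]
      exact hβlo _ (hw (hA 0))
    by_cases hB : ∀ i, f i < j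
    · have hc : cPt f j = e.n + 1 :=
        cPt_eq f j le_rfl fun i'' => ⟨fun _ => i''.isLt, fun _ => hB i''⟩
      rw [hc, region_top]
      exact hβhi _ (hw (hB _))
    push_neg at hA hB
    obtain ⟨ia, hia⟩ := hA
    obtain ⟨ib, hib⟩ := hB
    have hia' : f ia < j := lt_of_le_of_ne hia (hne ia)
    have hib' : j < f ib := lt_of_le_of_ne hib (fun h => hne ib h.symm)
    set A : Finset (Fin (e.n + 1)) := Finset.univ.filter (fun i => f i < j) with hAdef
    have hAne : A.Nonempty := ⟨ia, Finset.mem_filter.mpr ⟨Finset.mem_univ _, hia'⟩⟩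
    have hi₀ : f (A.max' hAne) < j := (Finset.mem_filter.mp (A.max'_mem hAne)).2
    have hv : (A.max' hAne).val < e.n := by
      by_contra hcon
      push_neg at hcon
      have hlast : A.max' hAne = Fin.last e.n :=
        Fin.ext (le_antisymm (Nat.lt_succ_iff.mp (A.max' hAne).isLt) hcon)
      have hle := hf.monotone (Fin.le_last ib)
      rw [← hlast] at hle
      exact absurd (lt_of_le_of_lt hle hi₀) (lt_asymm hib')
    have hsucc : j < f (⟨(A.max' hAne).val, hv⟩ : Fin e.n).succ := by
      have hnotmem : (⟨(A.max' hAne).val, hv⟩ : Fin e.n).succ ∉ A := by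
        intro hmem
        have := Fin.le_def.mp (A.le_max' _ hmem)
        simp only [Fin.val_succ] at this
        omega
      have hnl : ¬ f (⟨(A.max' hAne).val, hv⟩ : Fin e.n).succ < j := fun hlt =>
        hnotmem (Finset.mem_filter.mpr ⟨Finset.mem_univ _, hlt⟩)
      exact lt_of_le_of_ne (not_lt.mp hnl) (fun h => hne _ h.symm)
    have hc : cPt f j = (A.max' hAne).val + 1 := by
      refine cPt_eq f j (by omega) fun i'' => ⟨fun h' => ?_, fun h' => ?_⟩
      · exact Nat.lt_succ_iff.mpr
          (Fin.le_def.mp (A.le_max' i'' (Finset.mem_filter.mpr ⟨Finset.mem_univ _, h'⟩)))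
      · exact lt_of_le_of_lt (hf.monotone (Fin.le_def.mpr (Nat.lt_succ_iff.mp h'))) hi₀
    rw [hc, region_mid e _ hv]
    refine hβ ⟨(A.max' hAne).val, hv⟩ (w j) ?_ (hw hsucc)
    have hcs : (⟨(A.max' hAne).val, hv⟩ : Fin e.n).castSucc = A.max' hAne := Fin.ext rfl
    rw [hcs]
    exact hw hi₀
  · intro j y h1 h2
    unfold regIv
    by_cases hA : ∀ i, j.castSucc < f i
    · have hc : cIv f j = 0 := by
        refine cIv_eq f j (Nat.zero_le _) fun i'' => ⟨fun h' => ?_, fun h' => ?_⟩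
        · exact absurd (lt_of_le_of_lt h' (hA i'')) (lt_irrefl _)
        · exact (Nat.not_lt_zero _ h').elim
      rw [hc, region_zero]
      apply hβlo
      have hs : j.succ ≤ f 0 := Fin.le_def.mpr (by
        have := Fin.lt_def.mp (hA 0)
        simp only [Fin.coe_castSucc, Fin.val_succ] at *
        omega)
      exact lt_of_lt_of_le h2 (hw.monotone hs)
    by_cases hB : ∀ i, f i ≤ j.castSucc
    · have hc : cIv f j = e.n + 1 :=
        cIv_eq f j le_rfl fun i'' => ⟨fun _ => i''.isLt, fun _ => hB i''⟩
      rw [hc, region_top]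
      exact hβhi _ (lt_of_le_of_lt (hw.monotone (hB _)) h1)
    push_neg at hA hB
    obtain ⟨ia, hia⟩ := hA
    obtain ⟨ib, hib⟩ := hB
    have hia' : f ia ≤ j.castSucc := hia
    have hib' : j.castSucc < f ib := hib
    set A : Finset (Fin (e.n + 1)) := Finset.univ.filter (fun i => f i ≤ j.castSucc) with hAdef
    have hAne : A.Nonempty := ⟨ia, Finset.mem_filter.mpr ⟨Finset.mem_univ _, hia'⟩⟩
    have hi₀ : f (A.max' hAne) ≤ j.castSucc := (Finset.mem_filter.mp (A.max'_mem hAne)).2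
    have hv : (A.max' hAne).val < e.n := by
      by_contra hcon
      push_neg at hcon
      have hlast : A.max' hAne = Fin.last e.n :=
        Fin.ext (le_antisymm (Nat.lt_succ_iff.mp (A.max' hAne).isLt) hcon)
      have hle := hf.monotone (Fin.le_last ib)
      rw [← hlast] at hle
      exact absurd (le_trans hle hi₀) (not_le.mpr hib')
    have hsucc : j.succ ≤ f (⟨(A.max' hAne).val, hv⟩ : Fin e.n).succ := by
      have hnotmem : (⟨(A.max' hAne).val, hv⟩ : Fin e.n).succ ∉ A := by
        intro hmem
        have := Fin.le_def.mp (A.le_max' _ hmem)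
        simp only [Fin.val_succ] at this
        omega
      have hnl : ¬ f (⟨(A.max' hAne).val, hv⟩ : Fin e.n).succ ≤ j.castSucc := fun hle =>
        hnotmem (Finset.mem_filter.mpr ⟨Finset.mem_univ _, hle⟩)
      have hval := Fin.lt_def.mp (not_le.mp hnl)
      exact Fin.le_def.mpr (by simp only [Fin.coe_castSucc, Fin.val_succ] at *; omega)
    have hc : cIv f j = (A.max' hAne).val + 1 := by
      refine cIv_eq f j (by omega) fun i'' => ⟨fun h' => ?_, fun h' => ?_⟩
      · exact Nat.lt_succ_iff.mpr
          (Fin.le_def.mp (A.le_max' i'' (Finset.mem_filter.mpr ⟨Finset.mem_univ _, h'⟩)))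
      · exact le_trans (hf.monotone (Fin.le_def.mpr (Nat.lt_succ_iff.mp h'))) hi₀
    rw [hc, region_mid e _ hv]
    refine hβ ⟨(A.max' hAne).val, hv⟩ y ?_ (lt_of_lt_of_le h2 (hw.monotone hsucc))
    have hcs : (⟨(A.max' hAne).val, hv⟩ : Fin e.n).castSucc = A.max' hAne := Fin.ext rfl
    rw [hcs]
    exact lt_of_le_of_lt (hw.monotone hi₀) h1

end Halves


/-- All interleaving patterns of two ∃∀-formulas. -/
noncomputable def interleavings {σ : Type} {m : ℕ} (e₁ e₂ : EAForm σ m) : List (EAForm σ m) :=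
  (List.range (e₁.n + e₂.n + 2)).flatMap (fun n =>
    ((Finset.univ :
        Finset ((Fin (e₁.n + 1) → Fin (n + 1)) × (Fin (e₂.n + 1) → Fin (n + 1)))).toList).filterMap
      (fun p =>
        if (∀ a b : Fin (e₁.n + 1), a < b → p.1 a < p.1 b) ∧
            (∀ a b : Fin (e₂.n + 1), a < b → p.2 a < p.2 b) ∧
            (∀ k, p.1 (e₁.idx k) = p.2 (e₂.idx k))
          then some (mergeForm e₁ e₂ n p.1 p.2) else none))

lemma mem_interleavings {σ : Type} {m : ℕ} {e₁ e₂ g : EAForm σ m} :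
    g ∈ interleavings e₁ e₂ ↔
      ∃ n, n < e₁.n + e₂.n + 2 ∧
        ∃ (f₁ : Fin (e₁.n + 1) → Fin (n + 1)) (f₂ : Fin (e₂.n + 1) → Fin (n + 1)),
          StrictMono f₁ ∧ StrictMono f₂ ∧ (∀ k, f₁ (e₁.idx k) = f₂ (e₂.idx k)) ∧
          g = mergeForm e₁ e₂ n f₁ f₂ := by
  unfold interleavings
  rw [List.mem_flatMap]
  constructor
  · rintro ⟨n, hn, hg⟩
    rw [List.mem_range] at hn
    rw [List.mem_filterMap] at hg
    obtain ⟨p, -, hp⟩ := hg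
    split_ifs at hp with h
    · exact ⟨n, hn, p.1, p.2, fun a b hab => h.1 a b hab, fun a b hab => h.2.1 a b hab,
        h.2.2, (Option.some.inj hp).symm⟩
  · rintro ⟨n, hn, f₁, f₂, h1, h2, h3, rfl⟩
    refine ⟨n, List.mem_range.mpr hn, List.mem_filterMap.mpr
      ⟨(f₁, f₂), Finset.mem_toList.mpr (Finset.mem_univ _), ?_⟩⟩
    rw [if_pos ⟨fun a b hab => h1 hab, fun a b hab => h2 hab, h3⟩]

end EAConj


/-- the conjunction of two ∃∀-formulas is equivalent over all chains to a
disjunction of ∃∀-formulas. -/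
theorem ea_conj_to_disj (σ : Type) (m : ℕ) (e₁ e₂ : EAForm σ m) :
    ∃ L : List (EAForm σ m),
      ∀ (T : Type) [LinearOrder T] (I : σ → Set T) (z : Fin (m + 1) → T),
        (e₁.sat I z ∧ e₂.sat I z) ↔ EADisj L I z := by
  refine ⟨EAConj.interleavings e₁ e₂, ?_⟩
  intro T _ I z
  classical
  constructor
  · rintro ⟨⟨x, hx, hxz, hxα, hxβ, hxlo, hxhi⟩, ⟨u, hu, huz, huα, huβ, hulo, huhi⟩⟩
    set S : Finset T := Finset.univ.image x ∪ Finset.univ.image u with hS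
    have hSne : S.Nonempty :=
      ⟨x 0, Finset.mem_union_left _ (Finset.mem_image_of_mem x (Finset.mem_univ 0))⟩
    have hcard : S.card = (S.card - 1) + 1 :=
      (Nat.succ_pred_eq_of_pos (Finset.card_pos.mpr hSne)).symm
    set n := S.card - 1 with hn
    let oi := S.orderIsoOfFin hcard
    set w : Fin (n + 1) → T := fun j => (oi j : T) with hwdef
    have hw : StrictMono w := fun a b hab => Subtype.coe_lt_coe.mpr (oi.strictMono hab)
    have hmem₁ : ∀ i, x i ∈ S := fun i =>
      Finset.mem_union_left _ (Finset.mem_image_of_mem x (Finset.mem_univ i))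
    have hmem₂ : ∀ i, u i ∈ S := fun i =>
      Finset.mem_union_right _ (Finset.mem_image_of_mem u (Finset.mem_univ i))
    set f₁ : Fin (e₁.n + 1) → Fin (n + 1) := fun i => oi.symm ⟨x i, hmem₁ i⟩ with hf₁def
    set f₂ : Fin (e₂.n + 1) → Fin (n + 1) := fun i => oi.symm ⟨u i, hmem₂ i⟩ with hf₂def
    have hwf₁ : ∀ i, w (f₁ i) = x i := fun i =>
      congrArg Subtype.val (oi.apply_symm_apply ⟨x i, hmem₁ i⟩)
    have hwf₂ : ∀ i, w (f₂ i) = u i := fun i =>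
      congrArg Subtype.val (oi.apply_symm_apply ⟨u i, hmem₂ i⟩)
    have hf₁ : StrictMono f₁ := fun a b hab =>
      oi.symm.strictMono (Subtype.mk_lt_mk.mpr (hx hab))
    have hf₂ : StrictMono f₂ := fun a b hab =>
      oi.symm.strictMono (Subtype.mk_lt_mk.mpr (hu hab))
    have hcompat : ∀ k, f₁ (e₁.idx k) = f₂ (e₂.idx k) := fun k =>
      congrArg oi.symm (Subtype.ext
        (show x (e₁.idx k) = u (e₂.idx k) from (hxz k).symm.trans (huz k)))
    have hbound : n < e₁.n + e₂.n + 2 := by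
      have h1 : S.card ≤ (e₁.n + 1) + (e₂.n + 1) := by
        refine le_trans (Finset.card_union_le _ _) (add_le_add ?_ ?_)
        · simpa using (Finset.card_image_le (s := (Finset.univ : Finset (Fin (e₁.n + 1)))) (f := x))
        · simpa using (Finset.card_image_le (s := (Finset.univ : Finset (Fin (e₂.n + 1)))) (f := u))
      omega
    obtain ⟨hpt₁, hiv₁⟩ := EAConj.complete_half I e₁ hf₁ hw
      (fun i => by rw [hwf₁]; exact hxα i)
      (fun i y h1 h2 => hxβ i y (by rwa [hwf₁] at h1) (by rwa [hwf₁] at h2))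
      (fun y hy => hxlo y (by rwa [hwf₁] at hy))
      (fun y hy => hxhi y (by rwa [hwf₁] at hy))
    obtain ⟨hpt₂, hiv₂⟩ := EAConj.complete_half I e₂ hf₂ hw
      (fun i => by rw [hwf₂]; exact huα i)
      (fun i y h1 h2 => huβ i y (by rwa [hwf₂] at h1) (by rwa [hwf₂] at h2))
      (fun y hy => hulo y (by rwa [hwf₂] at hy))
      (fun y hy => huhi y (by rwa [hwf₂] at hy))
    refine ⟨EAConj.mergeForm e₁ e₂ n f₁ f₂,
      EAConj.mem_interleavings.mpr ⟨n, hbound, f₁, f₂, hf₁, hf₂, hcompat, rfl⟩,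
      w, hw, ?_, fun j => ⟨hpt₁ j, hpt₂ j⟩,
      fun j y h1 h2 => ⟨hiv₁ j y h1 h2, hiv₂ j y h1 h2⟩, ?_, ?_⟩
    · intro k
      show z k = w (f₁ (e₁.idx k))
      rw [hwf₁]
      exact hxz k
    · intro y hy
      constructor
      · exact hxlo y (by
          rw [← hwf₁ 0]
          exact lt_of_lt_of_le hy (hw.monotone (Fin.zero_le _)))
      · exact hulo y (by
          rw [← hwf₂ 0]
          exact lt_of_lt_of_le hy (hw.monotone (Fin.zero_le _)))
    · intro y hy
      constructor
      · exact hxhi y (by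
          rw [← hwf₁ (Fin.last e₁.n)]
          exact lt_of_le_of_lt (hw.monotone (Fin.le_last _)) hy)
      · exact huhi y (by
          rw [← hwf₂ (Fin.last e₂.n)]
          exact lt_of_le_of_lt (hw.monotone (Fin.le_last _)) hy)
  · rintro ⟨g, hg, hsat⟩
    obtain ⟨n, hn, f₁, f₂, hf₁, hf₂, hcompat, rfl⟩ := EAConj.mem_interleavings.mp hg
    obtain ⟨w, hw, hz, hα, hβ, hlo, hhi⟩ := hsat
    obtain ⟨hα₁, hβ₁, hlo₁, hhi₁⟩ := EAConj.sound_half I e₁ hf₁ hw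
      (fun j => (hα j).1) (fun j y h1 h2 => (hβ j y h1 h2).1)
      (fun y hy => (hlo y hy).1) (fun y hy => (hhi y hy).1)
    obtain ⟨hα₂, hβ₂, hlo₂, hhi₂⟩ := EAConj.sound_half I e₂ hf₂ hw
      (fun j => (hα j).2) (fun j y h1 h2 => (hβ j y h1 h2).2)
      (fun y hy => (hlo y hy).2) (fun y hy => (hhi y hy).2)
    constructor
    · exact ⟨fun i => w (f₁ i), hw.comp hf₁, fun k => hz k, hα₁, hβ₁, hlo₁, hhi₁⟩
    · exact ⟨fun i => w (f₂ i), hw.comp hf₂,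
        fun k => (hz k).trans (congrArg w (hcompat k)), hα₂, hβ₂, hlo₂, hhi₂⟩
end

section
/- For every ∃∀-formula φ, the formula ∃x φ is equivalent over all chains to an ∃∀-formula. -/
/-- for every ∃∀-formula φ, the formula ∃x φ is equivalent over all chains
to an ∃∀-formula (quantifying the free variable z_k away). -/
theorem ea_exists_to_ea (σ : Type) (m : ℕ) (e : EAForm σ (m + 1)) (k : Fin (m + 2)) :
    ∃ f : EAForm σ m,
      ∀ (T : Type) [LinearOrder T] (I : σ → Set T) (z : Fin (m + 1) → T),
        (∃ t : T, e.sat I (Fin.insertNth k t z)) ↔ f.sat I z := by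
  refine ⟨⟨e.n, fun j => e.idx (k.succAbove j), e.α, e.βmid, e.βlo, e.βhi⟩, ?_⟩
  intro T _ I z
  constructor
  · rintro ⟨t, x, hmono, hz, hα, hβ, hlo, hhi⟩
    refine ⟨x, hmono, ?_, hα, hβ, hlo, hhi⟩
    intro j
    have := hz (k.succAbove j)
    simpa [Fin.insertNth_apply_succAbove] using this
  · rintro ⟨x, hmono, hz, hα, hβ, hlo, hhi⟩
    refine ⟨x (e.idx k), x, hmono, ?_, hα, hβ, hlo, hhi⟩
    intro i
    by_cases h : i = k
    · subst h; simp
    · obtain ⟨j, rfl⟩ := Fin.exists_succAbove_eq h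
      simpa [Fin.insertNth_apply_succAbove] using hz j
end

section
/- Every ∃∀-formula is equivalent over all chains to a conjunction of ∃∀-formulas each having at most two free variables. -/
/-!
The two-variable formulas are `e` itself with all but two free variables forgotten. A witness of
`e` is one increasing tuple `x₀ < … < x_n` satisfying the local conditions, and the free variables
only pin some of its entries. Given, for every pair of free variables, a witness pinning both, glue
one witness pinning all of them: at position `i` take the entry of the witness for the pair
(last free variable at or before `i`, first one after `i`). This pair is constant between
consecutive pinned positions, and at a pinned position all witnesses concerned agree, so any two
consecutive entries come from a common witness and the local conditions survive the gluing.
-/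

theorem Finset.exists_argmax_and_argmin_compl {ι α : Type*} [Fintype ι] [Nonempty ι]
    [LinearOrder α] (p : ι → α) (S : Finset ι) :
    ∃ ab : ι × ι, (∀ k ∈ S, ab.1 ∈ S ∧ p k ≤ p ab.1) ∧ (∀ k ∉ S, ab.2 ∉ S ∧ p ab.2 ≤ p k) := by
  classical
  obtain ⟨a, ha⟩ : ∃ a, ∀ k ∈ S, a ∈ S ∧ p k ≤ p a := by
    rcases S.eq_empty_or_nonempty with rfl | hS
    · exact ⟨Classical.arbitrary ι, by simp⟩
    · obtain ⟨a, haS, hmax⟩ := S.exists_max_image p hS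
      exact ⟨a, fun k hk => ⟨haS, hmax k hk⟩⟩
  obtain ⟨b, hb⟩ : ∃ b, ∀ k ∉ S, b ∉ S ∧ p b ≤ p k := by
    rcases Sᶜ.eq_empty_or_nonempty with hS | hS
    · exact ⟨Classical.arbitrary ι, fun k hk => absurd (Finset.mem_compl.2 hk) (by simp [hS])⟩
    · obtain ⟨b, hbS, hmin⟩ := Sᶜ.exists_min_image p hS
      exact ⟨b, fun k hk => ⟨Finset.mem_compl.1 hbS, hmin k (Finset.mem_compl.2 hk)⟩⟩
  exact ⟨(a, b), ha, hb⟩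

/-- Take `sel i` = (last `k` with `p k ≤ i`, first `k` with `i < p k`); as it depends only on
`{k | p k ≤ i}`, it is constant between consecutive values of `p`. -/
theorem exists_bracket_selector {ι : Type*} [Fintype ι] [Nonempty ι] {n : ℕ}
    (p : ι → Fin (n + 1)) :
    ∃ sel : Fin (n + 1) → ι × ι, (∀ k, p (sel (p k)).1 = p k) ∧
      ∀ i : Fin n, sel i.castSucc = sel i.succ ∨
        (p (sel i.castSucc).2 = i.succ ∧ p (sel i.succ).1 = i.succ) := by
  choose pick hpick using Finset.exists_argmax_and_argmin_compl p
  let below : Fin (n + 1) → Finset ι := fun i => Finset.univ.filter (p · ≤ i)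
  have mem_below : ∀ k i, k ∈ below i ↔ p k ≤ i := by simp [below]
  refine ⟨fun i => pick (below i), fun k => ?_, fun i => ?_⟩
  · obtain ⟨ha, hle⟩ := (hpick (below (p k))).1 k ((mem_below _ _).2 le_rfl)
    exact le_antisymm ((mem_below _ _).1 ha) hle
  · by_cases hk : ∃ k, p k = i.succ
    · obtain ⟨k, hk⟩ := hk
      right
      obtain ⟨hb, hbk⟩ := (hpick (below i.castSucc)).2 k (by
        rw [mem_below, hk, not_le]; exact Fin.castSucc_lt_succ)
      obtain ⟨ha, hka⟩ := (hpick (below i.succ)).1 k ((mem_below _ _).2 hk.le)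
      rw [mem_below, not_le] at hb
      rw [mem_below] at ha
      rw [hk] at hbk hka
      exact ⟨le_antisymm hbk (Fin.castSucc_lt_iff_succ_le.1 hb), le_antisymm ha hka⟩
    · left
      refine congrArg pick (Finset.filter_congr fun k _ => ?_)
      have hk_val : (p k).val ≠ i.val + 1 := fun h => hk ⟨k, Fin.ext (by simpa using h)⟩
      simp only [Fin.le_def, Fin.val_succ, Fin.val_castSucc]
      omega

namespace EAForm

variable {σ : Type} {m : ℕ}

def pair (e : EAForm σ m) (j k : Fin (m + 1)) : EAForm σ 1 :=
  { e with idx := ![e.idx j, e.idx k] }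

variable {T : Type} [LinearOrder T] (I : σ → Set T)

def IsWitness (e : EAForm σ m) (x : Fin (e.n + 1) → T) : Prop :=
  StrictMono x ∧ (∀ j, (e.α j).sat I (x j)) ∧
    (∀ j : Fin e.n, ∀ y, x j.castSucc < y → y < x j.succ → (e.βmid j).sat I y) ∧
    (∀ y, y < x 0 → e.βlo.sat I y) ∧ (∀ y, x (Fin.last e.n) < y → e.βhi.sat I y)

theorem sat_iff (e : EAForm σ m) (z : Fin (m + 1) → T) :
    e.sat I z ↔ ∃ x, e.IsWitness I x ∧ ∀ k, z k = x (e.idx k) :=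
  ⟨fun ⟨x, hx, hz, hα, hβ, hlo, hhi⟩ => ⟨x, ⟨hx, hα, hβ, hlo, hhi⟩, hz⟩,
    fun ⟨x, ⟨hx, hα, hβ, hlo, hhi⟩, hz⟩ => ⟨x, hx, hz, hα, hβ, hlo, hhi⟩⟩

theorem pair_sat_iff (e : EAForm σ m) (j k : Fin (m + 1)) (a b : T) :
    (e.pair j k).sat I ![a, b] ↔ ∃ x, e.IsWitness I x ∧ a = x (e.idx j) ∧ b = x (e.idx k) := by
  rw [sat_iff]
  exact exists_congr fun x => and_congr Iff.rfl Fin.forall_fin_two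

theorem IsWitness.diag {e : EAForm σ m} {W : Fin (e.n + 1) → Fin (e.n + 1) → T}
    (hW : ∀ i, e.IsWitness I (W i))
    (hcompat : ∀ i : Fin e.n, W i.castSucc i.succ = W i.succ i.succ) :
    e.IsWitness I fun i => W i i := by
  refine ⟨Fin.strictMono_iff_lt_succ.2 fun i => ?_, fun i => (hW i).2.1 i,
    fun i y h₁ h₂ => (hW i.castSucc).2.2.1 i y h₁ (h₂.trans_eq (hcompat i).symm),
    (hW 0).2.2.2.1, (hW _).2.2.2.2⟩
  exact ((hW i.castSucc).1 Fin.castSucc_lt_succ).trans_eq (hcompat i)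

theorem sat_iff_forall_pair_sat (e : EAForm σ m) (z : Fin (m + 1) → T) :
    e.sat I z ↔ ∀ j k, (e.pair j k).sat I ![z j, z k] := by
  simp only [pair_sat_iff]
  rw [sat_iff]
  constructor
  · rintro ⟨x, hx, hz⟩ j k
    exact ⟨x, hx, hz j, hz k⟩
  intro h
  choose w hw hzj hzk using h
  have hpinned : ∀ a b, e.idx a = e.idx b → z a = z b := fun a b hab => by
    rw [hzj a b, hzk a b, hab]
  obtain ⟨sel, hsel_pin, hsel_gap⟩ := exists_bracket_selector e.idx
  let W := fun i => w (sel i).1 (sel i).2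
  refine ⟨fun i => W i i, IsWitness.diag I (fun i => hw _ _) fun i => ?_, fun k => ?_⟩
  · rcases hsel_gap i with heq | ⟨hb, ha⟩
    · simp only [W, heq]
    · calc W i.castSucc i.succ = z (sel i.castSucc).2 := by rw [hzk, hb]
        _ = z (sel i.succ).1 := hpinned _ _ (hb.trans ha.symm)
        _ = W i.succ i.succ := by rw [hzj, ha]
  · calc z k = z (sel (e.idx k)).1 := hpinned _ _ (hsel_pin k).symm
      _ = W (e.idx k) (e.idx k) := by rw [hzj, hsel_pin]

end EAForm

/-- every ∃∀-formula is equivalent over all chains to a conjunction of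
∃∀-formulas each with at most two free variables (here: exactly two, taken among the
original free variables). -/
theorem ea_to_two_var_conj (σ : Type) (m : ℕ) (e : EAForm σ m) :
    ∃ L : List (EAForm σ 1 × Fin (m + 1) × Fin (m + 1)),
      ∀ (T : Type) [LinearOrder T] (I : σ → Set T) (z : Fin (m + 1) → T),
        e.sat I z ↔ ∀ p ∈ L, p.1.sat I ![z p.2.1, z p.2.2] := by
  refine ⟨(List.finRange (m + 1)).flatMap fun j =>
    (List.finRange (m + 1)).map fun k => (e.pair j k, j, k), fun T _ I z => ?_⟩
  simp only [e.sat_iff_forall_pair_sat, List.mem_flatMap, List.mem_map, List.mem_finRange,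
    true_and, forall_exists_index]
  constructor
  · rintro h _ j k rfl
    exact h j k
  · exact fun h j k => h _ j k rfl
end

section
/- The set of D∃∀ formulas (formulas equivalent to disjunctions of ∃∀-formulas) is closed under disjunction, conjunction, and existential quantification. -/
/-!
Disjunction is concatenation of lists, and existentially quantifying `z_k` only forgets which
witness point `z_k` was. For conjunction, the witness sequences of two ∃∀-formulas `e₁`, `e₂` at
the same `z` interleave into one strictly increasing sequence `y` of length at most `n₁ + n₂ + 2`,
through strictly monotone maps `f`, `g` of the indices. Every point and every open gap of `y` lies
in a single region of each `eᵢ`, so the constraints that `e₁` and `e₂` put on it form one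
quantifier-free formula, and `y` witnesses the resulting merged ∃∀-formula. Conversely a model of
a merged formula restricts along `f` and `g` to models of `e₁` and `e₂`. There are finitely many
interleaving patterns `(f, g)`, so the conjunction is the disjunction of the merged formulas.
-/

namespace QF

variable {σ T : Type} {I : σ → Set T} {t : T}

def when (p : Prop) [Decidable p] (φ : QF σ) : QF σ := if p then φ else .tt

theorem sat_when {p : Prop} [Decidable p] {φ : QF σ} :
    (when p φ).sat I t ↔ (p → φ.sat I t) := by
  unfold when
  split_ifs with hp <;> simp [hp, QF.sat]

def bigAnd : {k : ℕ} → (Fin k → QF σ) → QF σ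
  | 0, _ => .tt
  | _ + 1, φ => .and (φ 0) (bigAnd fun i => φ i.succ)

theorem sat_bigAnd {k : ℕ} {φ : Fin k → QF σ} :
    (bigAnd φ).sat I t ↔ ∀ i, (φ i).sat I t := by
  induction k with
  | zero => simp [bigAnd, QF.sat]
  | succ k ih => simp [bigAnd, QF.sat, ih, Fin.forall_fin_succ]

end QF

theorem Fin.lt_or_eq_or_between_or_gt {T : Type} [LinearOrder T] {N : ℕ}
    (y : Fin (N + 1) → T) (t : T) :
    t < y 0 ∨ (∃ j, y j = t) ∨ (∃ j : Fin N, y j.castSucc < t ∧ t < y j.succ) ∨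
      y (Fin.last N) < t := by
  induction N with
  | zero =>
    rcases lt_trichotomy t (y 0) with h | h | h
    exacts [.inl h, .inr (.inl ⟨0, h.symm⟩), .inr (.inr (.inr h))]
  | succ N ih =>
    rcases ih (y ∘ Fin.castSucc) with h | ⟨j, h⟩ | ⟨j, h⟩ | h
    · exact .inl h
    · exact .inr (.inl ⟨_, h⟩)
    · exact .inr (.inr (.inl ⟨j.castSucc, by rw [Fin.succ_castSucc]; exact h⟩))
    · rcases lt_trichotomy t (y (Fin.last (N + 1))) with h' | h' | h'
      · exact .inr (.inr (.inl ⟨Fin.last N, h, by rwa [Fin.succ_last]⟩))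
      · exact .inr (.inl ⟨_, h'.symm⟩)
      · exact .inr (.inr (.inr h'))

theorem exists_strictMono_comp_eq_pair {T : Type} [LinearOrder T] {a b : ℕ}
    (x₁ : Fin (a + 1) → T) (x₂ : Fin (b + 1) → T) :
    ∃ N < a + b + 2, ∃ (y : Fin (N + 1) → T) (f : Fin (a + 1) → Fin (N + 1))
      (g : Fin (b + 1) → Fin (N + 1)), StrictMono y ∧ y ∘ f = x₁ ∧ y ∘ g = x₂ := by
  classical
  let S := Finset.univ.image x₁ ∪ Finset.univ.image x₂
  have hS₁ : ∀ i, x₁ i ∈ S := fun i => Finset.mem_union_left _ (by simp)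
  have hS₂ : ∀ i, x₂ i ∈ S := fun i => Finset.mem_union_right _ (by simp)
  obtain ⟨N, hN⟩ : ∃ N, S.card = N + 1 :=
    Nat.exists_eq_succ_of_ne_zero (Finset.card_pos.mpr ⟨x₁ 0, hS₁ 0⟩).ne'
  have hcard : S.card ≤ (a + 1) + (b + 1) :=
    (Finset.card_union_le _ _).trans (add_le_add
      (Finset.card_image_le.trans (by simp)) (Finset.card_image_le.trans (by simp)))
  let y := S.orderEmbOfFin hN
  have hS : ∀ t ∈ S, ∃ j, y j = t := fun t ht => by
    rwa [← Finset.mem_coe, ← S.range_orderEmbOfFin hN] at ht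
  choose f hf using fun i => hS (x₁ i) (hS₁ i)
  choose g hg using fun i => hS (x₂ i) (hS₂ i)
  exact ⟨N, by omega, y, f, g, y.strictMono, funext hf, funext hg⟩

namespace EAForm

open QF

variable {σ T : Type} {I : σ → Set T} {m N : ℕ}

/-- Given a refinement `y` of the points of `e` along `f`, `e.atPoint f j` is the constraint
that `e` imposes on the point `y j`, and `e.onGap f j` the one it imposes on the open interval
`(y j, y (j + 1))`. -/
def atPoint (e : EAForm σ m) (f : Fin (e.n + 1) → Fin (N + 1)) (j : Fin (N + 1)) : QF σ :=
  .and (.and (bigAnd fun i => when (f i = j) (e.α i)) (when (j < f 0) e.βlo))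
    (.and (when (f (Fin.last e.n) < j) e.βhi)
      (bigAnd fun i : Fin e.n => when (f i.castSucc < j ∧ j < f i.succ) (e.βmid i)))

def onGap (e : EAForm σ m) (f : Fin (e.n + 1) → Fin (N + 1)) (j : Fin N) : QF σ :=
  .and (.and (when (j.succ ≤ f 0) e.βlo) (when (f (Fin.last e.n) ≤ j.castSucc) e.βhi))
    (bigAnd fun i : Fin e.n => when (f i.castSucc ≤ j.castSucc ∧ j.succ ≤ f i.succ) (e.βmid i))

section

variable {e : EAForm σ m} {f : Fin (e.n + 1) → Fin (N + 1)} {t : T}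

theorem sat_atPoint {j : Fin (N + 1)} :
    (e.atPoint f j).sat I t ↔
      (∀ i, f i = j → (e.α i).sat I t) ∧ (j < f 0 → e.βlo.sat I t) ∧
        (f (Fin.last e.n) < j → e.βhi.sat I t) ∧
        ∀ i : Fin e.n, f i.castSucc < j → j < f i.succ → (e.βmid i).sat I t := by
  simp only [atPoint, QF.sat, sat_bigAnd, sat_when, and_imp, and_assoc]

theorem sat_onGap {j : Fin N} :
    (e.onGap f j).sat I t ↔
      (j.succ ≤ f 0 → e.βlo.sat I t) ∧ (f (Fin.last e.n) ≤ j.castSucc → e.βhi.sat I t) ∧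
        ∀ i : Fin e.n, f i.castSucc ≤ j.castSucc → j.succ ≤ f i.succ → (e.βmid i).sat I t := by
  simp only [onGap, QF.sat, sat_bigAnd, sat_when, and_imp, and_assoc]

end

variable [LinearOrder T]

def Holds (e : EAForm σ m) (I : σ → Set T) (x : Fin (e.n + 1) → T) : Prop :=
  (∀ j, (e.α j).sat I (x j)) ∧
    (∀ j : Fin e.n, ∀ t, x j.castSucc < t → t < x j.succ → (e.βmid j).sat I t) ∧
    (∀ t, t < x 0 → e.βlo.sat I t) ∧
    (∀ t, x (Fin.last e.n) < t → e.βhi.sat I t)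

theorem sat_iff_exists_holds {e : EAForm σ m} {z : Fin (m + 1) → T} :
    e.sat I z ↔ ∃ x, StrictMono x ∧ (∀ k, z k = x (e.idx k)) ∧ e.Holds I x :=
  Iff.rfl

def eraseVar (e : EAForm σ (m + 1)) (k : Fin (m + 2)) : EAForm σ m :=
  { e with idx := fun j => e.idx (k.succAbove j) }

theorem sat_eraseVar {e : EAForm σ (m + 1)} {k : Fin (m + 2)} {z : Fin (m + 1) → T} :
    (e.eraseVar k).sat I z ↔ ∃ t, e.sat I (Fin.insertNth k t z) := by
  simp only [sat_iff_exists_holds, eraseVar, Fin.forall_iff_succAbove k,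
    Fin.insertNth_apply_same, Fin.insertNth_apply_succAbove]
  constructor
  · rintro ⟨x, hx, hz, h⟩
    exact ⟨x (e.idx k), x, hx, ⟨rfl, hz⟩, h⟩
  · rintro ⟨t, x, hx, ⟨-, hz⟩, h⟩
    exact ⟨x, hx, hz, h⟩

variable {e : EAForm σ m} {f : Fin (e.n + 1) → Fin (N + 1)} {y : Fin (N + 1) → T}

theorem holds_comp_of_sat_constraints (hy : StrictMono y)
    (hpt : ∀ j, (e.atPoint f j).sat I (y j))
    (hgap : ∀ j : Fin N, ∀ t, y j.castSucc < t → t < y j.succ → (e.onGap f j).sat I t)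
    (hlo : ∀ t, t < y 0 → e.βlo.sat I t) (hhi : ∀ t, y (Fin.last N) < t → e.βhi.sat I t) :
    e.Holds I (y ∘ f) := by
  simp only [sat_atPoint] at hpt
  simp only [sat_onGap] at hgap
  have hmax : ∀ j, y j ≤ y (Fin.last N) := fun j => hy.monotone (Fin.le_last j)
  have hmin : ∀ j, y 0 ≤ y j := fun j => hy.monotone (Fin.zero_le j)
  refine ⟨fun i => (hpt (f i)).1 i rfl, fun i t h₁ h₂ => ?_, fun t ht => ?_, fun t ht => ?_⟩
  -- each position of `t` relative to `y` is covered by a conjunct of `atPoint` or `onGap`,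
  -- or is excluded by monotonicity
  all_goals rcases Fin.lt_or_eq_or_between_or_gt y t with h | ⟨j, rfl⟩ | ⟨j, h⟩ | h
  · exact (h.trans ((hmin _).trans_lt h₁)).false.elim
  · exact (hpt j).2.2.2 i (hy.lt_iff_lt.mp h₁) (hy.lt_iff_lt.mp h₂)
  · exact (hgap j t h.1 h.2).2.2 i
      (Fin.le_castSucc_iff.mpr (hy.lt_iff_lt.mp (h₁.trans h.2)))
      (Fin.castSucc_lt_iff_succ_le.mp (hy.lt_iff_lt.mp (h.1.trans h₂)))
  · exact (h.trans (h₂.trans_le (hmax _))).false.elim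
  · exact hlo t h
  · exact (hpt j).2.1 (hy.lt_iff_lt.mp ht)
  · exact (hgap j t h.1 h.2).1
      (Fin.castSucc_lt_iff_succ_le.mp (hy.lt_iff_lt.mp (h.1.trans ht)))
  · exact (h.trans (ht.trans_le (hmax _))).false.elim
  · exact (h.trans ((hmin _).trans_lt ht)).false.elim
  · exact (hpt j).2.2.1 (hy.lt_iff_lt.mp ht)
  · exact (hgap j t h.1 h.2).2.1
      (Fin.le_castSucc_iff.mpr (hy.lt_iff_lt.mp (ht.trans h.2)))
  · exact hhi t h

theorem holds_comp_iff (hy : StrictMono y) :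
    e.Holds I (y ∘ f) ↔
      (∀ j, (e.atPoint f j).sat I (y j)) ∧
        (∀ j : Fin N, ∀ t, y j.castSucc < t → t < y j.succ → (e.onGap f j).sat I t) ∧
        (∀ t, t < y 0 → e.βlo.sat I t) ∧ (∀ t, y (Fin.last N) < t → e.βhi.sat I t) := by
  refine ⟨fun ⟨hα, hmid, hlo, hhi⟩ => ⟨fun j => ?_, fun j t h₁ h₂ => ?_, fun t ht => ?_,
    fun t ht => ?_⟩,
    fun ⟨hpt, hgap, hlo, hhi⟩ => holds_comp_of_sat_constraints hy hpt hgap hlo hhi⟩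
  · refine sat_atPoint.mpr ⟨fun i hi => hi ▸ hα i, fun hj => hlo _ (hy hj),
      fun hj => hhi _ (hy hj), fun i hi₁ hi₂ => hmid i _ (hy hi₁) (hy hi₂)⟩
  · refine sat_onGap.mpr ⟨fun hj => hlo _ (h₂.trans_le (hy.monotone hj)),
      fun hj => hhi _ ((hy.monotone hj).trans_lt h₁), fun i hi₁ hi₂ =>
        hmid i _ ((hy.monotone hi₁).trans_lt h₁) (h₂.trans_le (hy.monotone hi₂))⟩
  · exact hlo t (ht.trans_le (hy.monotone (Fin.zero_le _)))
  · exact hhi t ((hy.monotone (Fin.le_last _)).trans_lt ht)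

def merge (e₁ e₂ : EAForm σ m) (f : Fin (e₁.n + 1) → Fin (N + 1))
    (g : Fin (e₂.n + 1) → Fin (N + 1)) : EAForm σ m where
  n := N
  idx k := f (e₁.idx k)
  α j := .and (e₁.atPoint f j) (e₂.atPoint g j)
  βmid j := .and (e₁.onGap f j) (e₂.onGap g j)
  βlo := .and e₁.βlo e₂.βlo
  βhi := .and e₁.βhi e₂.βhi

def IsMergePattern (e₁ e₂ : EAForm σ m) (f : Fin (e₁.n + 1) → Fin (N + 1))
    (g : Fin (e₂.n + 1) → Fin (N + 1)) : Prop :=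
  StrictMono f ∧ StrictMono g ∧ ∀ k, f (e₁.idx k) = g (e₂.idx k)

variable {e₁ e₂ : EAForm σ m} {f : Fin (e₁.n + 1) → Fin (N + 1)}
  {g : Fin (e₂.n + 1) → Fin (N + 1)} {z : Fin (m + 1) → T}

theorem holds_merge_iff (hy : StrictMono y) :
    (e₁.merge e₂ f g).Holds I y ↔ e₁.Holds I (y ∘ f) ∧ e₂.Holds I (y ∘ g) := by
  rw [holds_comp_iff hy, holds_comp_iff hy]
  simp only [Holds, merge, QF.sat, forall_and]
  tauto

theorem sat_of_sat_merge (hfg : IsMergePattern e₁ e₂ f g) (h : (e₁.merge e₂ f g).sat I z) :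
    e₁.sat I z ∧ e₂.sat I z := by
  obtain ⟨hf, hg, hidx⟩ := hfg
  obtain ⟨y, hy, hz, h⟩ := h
  obtain ⟨h₁, h₂⟩ := (holds_merge_iff hy).mp h
  exact ⟨⟨y ∘ f, hy.comp hf, hz, h₁⟩,
    ⟨y ∘ g, hy.comp hg, fun k => (hz k).trans (congrArg y (hidx k)), h₂⟩⟩

theorem exists_sat_merge (h₁ : e₁.sat I z) (h₂ : e₂.sat I z) :
    ∃ N < e₁.n + e₂.n + 2, ∃ (f : Fin (e₁.n + 1) → Fin (N + 1))
      (g : Fin (e₂.n + 1) → Fin (N + 1)), IsMergePattern e₁ e₂ f g ∧ (e₁.merge e₂ f g).sat I z := by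
  obtain ⟨x₁, hx₁, hz₁, h₁⟩ := h₁
  obtain ⟨x₂, hx₂, hz₂, h₂⟩ := h₂
  obtain ⟨N, hN, y, f, g, hy, rfl, rfl⟩ := exists_strictMono_comp_eq_pair x₁ x₂
  have hidx : ∀ k, f (e₁.idx k) = g (e₂.idx k) :=
    fun k => hy.injective ((hz₁ k).symm.trans (hz₂ k))
  refine ⟨N, hN, f, g, ⟨fun a b hab => hy.lt_iff_lt.mp (hx₁ hab),
    fun a b hab => hy.lt_iff_lt.mp (hx₂ hab), hidx⟩,
    y, hy, hz₁, (holds_merge_iff hy).mpr ⟨h₁, h₂⟩⟩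

open Classical in
noncomputable def conjList (e₁ e₂ : EAForm σ m) : List (EAForm σ m) :=
  (List.range (e₁.n + e₂.n + 2)).flatMap fun N =>
    (Finset.univ.filter
      fun fg : (Fin (e₁.n + 1) → Fin (N + 1)) × (Fin (e₂.n + 1) → Fin (N + 1)) =>
        IsMergePattern e₁ e₂ fg.1 fg.2).toList.map fun fg => e₁.merge e₂ fg.1 fg.2

theorem mem_conjList {e : EAForm σ m} :
    e ∈ conjList e₁ e₂ ↔ ∃ N < e₁.n + e₂.n + 2, ∃ (f : Fin (e₁.n + 1) → Fin (N + 1))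
      (g : Fin (e₂.n + 1) → Fin (N + 1)), IsMergePattern e₁ e₂ f g ∧ e₁.merge e₂ f g = e := by
  classical
  simp [conjList]

theorem sat_and_sat_iff_eaDisj_conjList :
    e₁.sat I z ∧ e₂.sat I z ↔ EADisj (conjList e₁ e₂) I z := by
  constructor
  · rintro ⟨h₁, h₂⟩
    obtain ⟨N, hN, f, g, hfg, h⟩ := exists_sat_merge h₁ h₂
    exact ⟨_, mem_conjList.mpr ⟨N, hN, f, g, hfg, rfl⟩, h⟩
  · rintro ⟨e, he, h⟩
    obtain ⟨N, -, f, g, hfg, rfl⟩ := mem_conjList.mp he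
    exact sat_of_sat_merge hfg h

end EAForm

section

variable {σ T : Type} [LinearOrder T] {I : σ → Set T} {m : ℕ} {z : Fin (m + 1) → T}

theorem eaDisj_append {L₁ L₂ : List (EAForm σ m)} :
    EADisj (L₁ ++ L₂) I z ↔ EADisj L₁ I z ∨ EADisj L₂ I z := by
  simp only [EADisj, List.mem_append, or_and_right, exists_or]

theorem eaDisj_flatMap {α : Type} {L : List α} {F : α → List (EAForm σ m)} :
    EADisj (L.flatMap F) I z ↔ ∃ a ∈ L, EADisj (F a) I z := by
  simp only [EADisj, List.mem_flatMap]
  constructor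
  · rintro ⟨e, ⟨a, ha, he⟩, h⟩
    exact ⟨a, ha, e, he, h⟩
  · rintro ⟨a, ha, e, he, h⟩
    exact ⟨e, ⟨a, ha, he⟩, h⟩

theorem eaDisj_map_eraseVar {L : List (EAForm σ (m + 1))} {k : Fin (m + 2)} :
    EADisj (L.map (·.eraseVar k)) I z ↔ ∃ t, EADisj L I (Fin.insertNth k t z) := by
  simp only [EADisj, List.mem_map]
  constructor
  · rintro ⟨_, ⟨e, he, rfl⟩, h⟩
    obtain ⟨t, h⟩ := EAForm.sat_eraseVar.mp h
    exact ⟨t, e, he, h⟩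
  · rintro ⟨t, e, he, h⟩
    exact ⟨_, ⟨e, he, rfl⟩, EAForm.sat_eraseVar.mpr ⟨t, h⟩⟩

end

/-- D∃∀ formulas (disjunctions of ∃∀-formulas) are closed under
disjunction, conjunction, and existential quantification. -/
theorem dea_closure (σ : Type) :
    (∀ (m : ℕ) (L₁ L₂ : List (EAForm σ m)), ∃ L : List (EAForm σ m),
      ∀ (T : Type) [LinearOrder T] (I : σ → Set T) (z : Fin (m + 1) → T),
        (EADisj L₁ I z ∨ EADisj L₂ I z) ↔ EADisj L I z) ∧
    (∀ (m : ℕ) (L₁ L₂ : List (EAForm σ m)), ∃ L : List (EAForm σ m),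
      ∀ (T : Type) [LinearOrder T] (I : σ → Set T) (z : Fin (m + 1) → T),
        (EADisj L₁ I z ∧ EADisj L₂ I z) ↔ EADisj L I z) ∧
    (∀ (m : ℕ) (L₁ : List (EAForm σ (m + 1))) (k : Fin (m + 2)),
      ∃ L : List (EAForm σ m),
        ∀ (T : Type) [LinearOrder T] (I : σ → Set T) (z : Fin (m + 1) → T),
          (∃ t : T, EADisj L₁ I (Fin.insertNth k t z)) ↔ EADisj L I z) := by
  refine ⟨fun m L₁ L₂ => ⟨L₁ ++ L₂, fun T _ I z => eaDisj_append.symm⟩,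
    fun m L₁ L₂ => ⟨L₁.flatMap fun e₁ => L₂.flatMap (EAForm.conjList e₁), fun T _ I z => ?_⟩,
    fun m L₁ k => ⟨L₁.map (·.eraseVar k), fun T _ I z => eaDisj_map_eraseVar.symm⟩⟩
  simp only [eaDisj_flatMap, ← EAForm.sat_and_sat_iff_eaDisj_conjList]
  exact ⟨fun ⟨⟨e₁, h₁, s₁⟩, ⟨e₂, h₂, s₂⟩⟩ => ⟨e₁, h₁, e₂, h₂, s₁, s₂⟩,
    fun ⟨e₁, h₁, e₂, h₂, s₁, s₂⟩ => ⟨⟨e₁, h₁, s₁⟩, ⟨e₂, h₂, s₂⟩⟩⟩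
end

section
/- Every ∃∀-formula with exactly one free variable is equivalent over all chains to a TL(U,S) formula. Specifically, the formula [α₀,β₁,α₁,…,β_n,α_n with end conditions β₀ before x₀ and β_{n+1} after x_n], with free variable z₀ = x_k, is equivalent to the conjunction of A_k ∧ (B_{k+1} U (A_{k+1} ∧ (B_{k+2} U ⋯ (A_n ∧ G B_{n+1})⋯))) and A_k ∧ (B_{k-1} S (A_{k-1} ∧ ⋯ (A₀ ∧ G⁻ B₀)⋯)), where A_i, B_i are the propositional temporal formulas corresponding to the quantifier-free α_i, β_i. -/
/-! With the witnesses `x₀ < … < x_n` indexed by `ℕ`, the condition `x_k = t` splits an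
∃∀-formula into two independent conditions, one on `x_k < … < x_n` (with `β_{n+1}` after `x_n`)
and one on `x₀ < … < x_k` (with `β₀` before `x₀`): the halves share only the point `t`, so any
two witnesses can be glued at `k`. Unfolding the nested Untils one step at a time shows that the
future part says exactly that the first half exists; dually, the nested Sinces of the past part
say that the second half exists. -/

@[simp]
theorem QF.sat_toTL {σ T : Type} [LinearOrder T] (I : σ → Set T) (φ : QF σ) (t : T) :
    φ.toTL.sat I t ↔ φ.sat I t := by
  induction φ <;> simp [QF.toTL, TL.sat, QF.sat, *]

@[simp]
theorem TL.sat_G {σ T : Type} [LinearOrder T] (I : σ → Set T) (F : TL σ) (t : T) :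
    F.G.sat I t ↔ ∀ s, t < s → F.sat I s := by
  simp [TL.G, TL.sat]

@[simp]
theorem TL.sat_Gm {σ T : Type} [LinearOrder T] (I : σ → Set T) (F : TL σ) (t : T) :
    F.Gm.sat I t ↔ ∀ s, s < t → F.sat I s := by
  simp [TL.Gm, TL.sat]

section ChainOn

variable {σ T : Type} [LinearOrder T] (I : σ → Set T) (a b : ℕ → TL σ)

/-- The points are indexed by all of `ℕ` so that chains over different index ranges live in one
type and can be glued. -/
def ChainOn (x : ℕ → T) (lo hi : ℕ) : Prop :=
  (∀ j, lo ≤ j → j ≤ hi → (a j).sat I (x j)) ∧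
  ∀ j, lo ≤ j → j < hi → x j < x (j + 1) ∧ ∀ y, x j < y → y < x (j + 1) → (b j).sat I y

variable {I a b}

theorem ChainOn.congr {x x' : ℕ → T} {lo hi : ℕ} (h : ChainOn I a b x lo hi)
    (hx : ∀ j, lo ≤ j → j ≤ hi → x j = x' j) : ChainOn I a b x' lo hi := by
  refine ⟨fun j hlo hhi => hx j hlo hhi ▸ h.1 j hlo hhi, fun j hlo hhi => ?_⟩
  rw [← hx j hlo hhi.le, ← hx (j + 1) (by omega) hhi]
  exact h.2 j hlo hhi

theorem chainOn_append_iff {x : ℕ → T} {lo mid hi : ℕ} (hlo : lo ≤ mid) (hhi : mid ≤ hi) :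
    ChainOn I a b x lo mid ∧ ChainOn I a b x mid hi ↔ ChainOn I a b x lo hi := by
  constructor
  · rintro ⟨⟨hα, hβ⟩, ⟨hα', hβ'⟩⟩
    refine ⟨fun j h1 h2 => ?_, fun j h1 h2 => ?_⟩
    · rcases le_total j mid with h | h
      exacts [hα j h1 h, hα' j h h2]
    · rcases lt_or_ge j mid with h | h
      exacts [hβ j h1 h, hβ' j h h2]
  · rintro ⟨hα, hβ⟩
    exact ⟨⟨fun j h1 h2 => hα j h1 (h2.trans hhi), fun j h1 h2 => hβ j h1 (h2.trans_le hhi)⟩,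
      fun j h1 h2 => hα j (hlo.trans h1) h2, fun j h1 h2 => hβ j (hlo.trans h1) h2⟩

theorem chainOn_succ_iff {x : ℕ → T} {j : ℕ} :
    ChainOn I a b x j (j + 1) ↔ (a j).sat I (x j) ∧ (a (j + 1)).sat I (x (j + 1)) ∧
      x j < x (j + 1) ∧ ∀ y, x j < y → y < x (j + 1) → (b j).sat I y := by
  constructor
  · rintro ⟨hα, hβ⟩
    exact ⟨hα j le_rfl (by omega), hα (j + 1) (by omega) le_rfl, hβ j le_rfl (by omega)⟩
  · rintro ⟨h₀, h₁, hstep⟩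
    refine ⟨fun i h1 h2 => ?_, fun i h1 h2 => ?_⟩
    · obtain rfl | rfl : i = j ∨ i = j + 1 := by omega
      exacts [h₀, h₁]
    · obtain rfl : i = j := by omega
      exact hstep

theorem exists_chainOn_glue {k n : ℕ} (hk : k ≤ n) (t : T) (P Q : T → Prop) :
    (∃ x, x k = t ∧ ChainOn I a b x 0 n ∧ P (x 0) ∧ Q (x n)) ↔
      (∃ x, x k = t ∧ ChainOn I a b x k n ∧ Q (x n)) ∧
        (∃ x, x k = t ∧ ChainOn I a b x 0 k ∧ P (x 0)) := by
  constructor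
  · rintro ⟨x, hxk, hx, hP, hQ⟩
    rw [← chainOn_append_iff (Nat.zero_le k) hk] at hx
    exact ⟨⟨x, hxk, hx.2, hQ⟩, x, hxk, hx.1, hP⟩
  · rintro ⟨⟨xf, hf, hxf, hQ⟩, xp, hp, hxp, hP⟩
    set x : ℕ → T := fun j => if j ≤ k then xp j else xf j
    have hxp' : ∀ j ≤ k, x j = xp j := fun j hj => if_pos hj
    have hxf' : ∀ j, k ≤ j → x j = xf j := by
      intro j hj
      rcases hj.eq_or_lt with rfl | hlt
      · rw [hxp' _ le_rfl, hp, hf]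
      · exact if_neg (by omega)
    refine ⟨x, (hxp' k le_rfl).trans hp, (chainOn_append_iff (Nat.zero_le k) hk).1
      ⟨hxp.congr fun j _ hj => (hxp' j hj).symm, hxf.congr fun j hj _ => (hxf' j hj).symm⟩,
      by rwa [hxp' 0 (Nat.zero_le k)], by rwa [hxf' n hk]⟩

end ChainOn

section Nest

variable {σ T : Type} [LinearOrder T] {I : σ → Set T} {a b : ℕ → TL σ}

theorem sat_and_nestU_iff (tail : TL σ) (m lo : ℕ) (t : T) :
    ((a lo).and (nestU (List.ofFn fun j : Fin m => (b (lo + j), a (lo + j + 1))) tail)).sat I t ↔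
      ∃ x : ℕ → T, x lo = t ∧ ChainOn I a b x lo (lo + m) ∧ tail.sat I (x (lo + m)) := by
  induction m generalizing lo t with
  | zero =>
    simp only [List.ofFn_zero, nestU, TL.sat, add_zero]
    refine ⟨fun ⟨ha, htail⟩ => ⟨fun _ => t, rfl, ⟨?_, ?_⟩, htail⟩, ?_⟩
    · intro j h1 h2
      obtain rfl : j = lo := by omega
      exact ha
    · intro j _ _; omega
    · rintro ⟨x, rfl, hx, htail⟩
      exact ⟨hx.1 lo le_rfl le_rfl, htail⟩
  | succ m ih =>
    have hlist : (List.ofFn fun j : Fin (m + 1) => (b (lo + j), a (lo + j + 1))) =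
        (b lo, a (lo + 1)) :: List.ofFn fun j : Fin m => (b (lo + 1 + j), a (lo + 1 + j + 1)) := by
      simp only [List.ofFn_succ, Fin.val_zero, Fin.val_succ, add_zero]
      congr 3; funext j; congr 2 <;> omega
    have hlen : lo + (m + 1) = lo + 1 + m := by omega
    simp only [TL.sat] at ih ⊢
    rw [hlist, nestU, hlen]
    simp only [TL.sat, ih, chainOn_succ_iff,
      ← chainOn_append_iff (Nat.le_add_right lo 1) (Nat.le_add_right (lo + 1) m)]
    constructor
    · rintro ⟨ha, t', htt', ⟨x, rfl, hx, htail⟩, hb⟩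
      have hfar : ∀ j, lo + 1 ≤ j → Function.update x lo t j = x j :=
        fun j hj => Function.update_of_ne (by omega) _ _
      refine ⟨Function.update x lo t, by simp, ⟨?_, hx.congr fun j hj _ => (hfar j hj).symm⟩, ?_⟩
      · simp only [Function.update_self, hfar (lo + 1) le_rfl]
        exact ⟨ha, hx.1 _ le_rfl (by omega), htt', hb⟩
      · rwa [hfar _ (by omega)]
    · rintro ⟨x, rfl, ⟨⟨ha, -, hlt, hb⟩, hx⟩, htail⟩
      exact ⟨ha, x (lo + 1), hlt, ⟨x, rfl, hx, htail⟩, hb⟩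

theorem sat_and_nestS_iff (tail : TL σ) (m : ℕ) (t : T) :
    ((a m).and (nestS (List.ofFn fun j : Fin m => (b (m - 1 - j), a (m - 1 - j))) tail)).sat I t ↔
      ∃ x : ℕ → T, x m = t ∧ ChainOn I a b x 0 m ∧ tail.sat I (x 0) := by
  induction m generalizing t with
  | zero =>
    simp only [List.ofFn_zero, nestS, TL.sat]
    refine ⟨fun ⟨ha, htail⟩ => ⟨fun _ => t, rfl, ⟨?_, ?_⟩, htail⟩, ?_⟩
    · intro j _ h2
      obtain rfl : j = 0 := by omega
      exact ha
    · intro j _ _; omega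
    · rintro ⟨x, rfl, hx, htail⟩
      exact ⟨hx.1 0 le_rfl le_rfl, htail⟩
  | succ m ih =>
    have hlist : (List.ofFn fun j : Fin (m + 1) => (b (m + 1 - 1 - j), a (m + 1 - 1 - j))) =
        (b m, a m) :: List.ofFn fun j : Fin m => (b (m - 1 - j), a (m - 1 - j)) := by
      simp only [List.ofFn_succ, Fin.val_zero, Fin.val_succ, add_tsub_cancel_right, tsub_zero]
      congr 3; funext j; congr 2 <;> omega
    simp only [TL.sat] at ih ⊢
    rw [hlist, nestS]
    simp only [TL.sat, ih, ← chainOn_append_iff (Nat.zero_le m) (Nat.le_add_right m 1),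
      chainOn_succ_iff]
    constructor
    · rintro ⟨ha, t', htt', ⟨x, rfl, hx, htail⟩, hb⟩
      have hnear : ∀ j, j ≤ m → Function.update x (m + 1) t j = x j :=
        fun j hj => Function.update_of_ne (by omega) _ _
      refine ⟨Function.update x (m + 1) t, by simp, ⟨hx.congr fun j _ hj => (hnear j hj).symm, ?_⟩,
        by rwa [hnear 0 (Nat.zero_le m)]⟩
      simp only [Function.update_self, hnear m le_rfl]
      exact ⟨hx.1 m (Nat.zero_le m) le_rfl, ha, htt', hb⟩
    · rintro ⟨x, rfl, ⟨hx, ⟨-, ha, hlt, hb⟩⟩, htail⟩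
      exact ⟨ha, x m, hlt, ⟨x, rfl, hx, htail⟩, hb⟩

end Nest

section EAForm

variable {σ T : Type} [LinearOrder T] {I : σ → Set T} {m : ℕ} (e : EAForm σ m)

@[simp]
theorem EAForm.sat_aExt (j : Fin (e.n + 1)) (t : T) : (e.aExt j).sat I t ↔ (e.α j).sat I t := by
  simp only [EAForm.aExt, dif_pos j.isLt, Fin.eta, QF.sat_toTL]

@[simp]
theorem EAForm.sat_bExt (j : Fin e.n) (t : T) : (e.bExt j).sat I t ↔ (e.βmid j).sat I t := by
  simp only [EAForm.bExt, dif_pos j.isLt, Fin.eta, QF.sat_toTL]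

theorem EAForm.sat_iff_exists_chainOn (z : Fin (m + 1) → T) :
    e.sat I z ↔ ∃ x : ℕ → T, (∀ k, z k = x (e.idx k)) ∧ ChainOn I e.aExt e.bExt x 0 e.n ∧
      (∀ y, y < x 0 → e.βlo.sat I y) ∧ ∀ y, x e.n < y → e.βhi.sat I y := by
  constructor
  · rintro ⟨x, hmono, hz, hα, hβ, hlo, hhi⟩
    set x' : ℕ → T := fun j => x ⟨min j e.n, by omega⟩
    have hx' : ∀ j : Fin (e.n + 1), x' j = x j :=
      fun j => congrArg x (Fin.ext (min_eq_left (by omega)))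
    refine ⟨x', fun k => (hz k).trans (hx' _).symm, ⟨fun j _ hj => ?_, fun j _ hj => ?_⟩, ?_, ?_⟩
    · have := hα ⟨j, by omega⟩
      rwa [← e.sat_aExt, ← hx'] at this
    · have h₀ := hx' ⟨j, by omega⟩
      have h₁ := hx' ⟨j + 1, by omega⟩
      simp only at h₀ h₁
      rw [h₀, h₁]
      exact ⟨hmono (Fin.mk_lt_mk.2 (by omega)),
        fun y hy₁ hy₂ => (e.sat_bExt ⟨j, hj⟩ y).2 (hβ ⟨j, hj⟩ y hy₁ hy₂)⟩
    · rwa [show x' 0 = x 0 from hx' 0]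
    · rwa [show x' e.n = x (Fin.last e.n) from hx' (Fin.last e.n)]
  · rintro ⟨x, hz, ⟨hα, hβ⟩, hlo, hhi⟩
    refine ⟨fun j => x j, Fin.strictMono_iff_lt_succ.2 fun j => (hβ j (Nat.zero_le _) j.isLt).1,
      hz, fun j => (e.sat_aExt j _).1 (hα j (Nat.zero_le _) (by omega)),
      fun j y h₁ h₂ => (e.sat_bExt j y).1 ((hβ j (Nat.zero_le _) j.isLt).2 y h₁ h₂), ?_, ?_⟩
    · simpa using hlo
    · simpa using hhi

end EAForm

section OneVariable

variable {σ T : Type} [LinearOrder T] {I : σ → Set T} (e : EAForm σ 0)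

theorem EAForm.sat_futureTL_iff (t : T) :
    e.futureTL.sat I t ↔ ∃ x : ℕ → T, x (e.idx 0) = t ∧
      ChainOn I e.aExt e.bExt x (e.idx 0) e.n ∧ ∀ y, x e.n < y → e.βhi.sat I y := by
  have hk : (e.idx 0 : ℕ) + (e.n - e.idx 0) = e.n := by omega
  rw [EAForm.futureTL, sat_and_nestU_iff, hk]
  simp only [TL.sat_G, QF.sat_toTL]

theorem EAForm.sat_pastTL_iff (t : T) :
    e.pastTL.sat I t ↔ ∃ x : ℕ → T, x (e.idx 0) = t ∧
      ChainOn I e.aExt e.bExt x 0 (e.idx 0) ∧ ∀ y, y < x 0 → e.βlo.sat I y := by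
  rw [EAForm.pastTL, sat_and_nestS_iff]
  simp only [TL.sat_Gm, QF.sat_toTL]

end OneVariable

/-- every ∃∀-formula with exactly one free variable is equivalent over all
chains to a TL(U,S) formula; specifically, to the conjunction of its future part
`A_k ∧ (B_{k+1} U (A_{k+1} ∧ … (A_n ∧ G B_{n+1})…))` and its past part
`A_k ∧ (B_k S (A_{k-1} ∧ … (A₀ ∧ G⁻ B₀)…))`. -/
theorem ea_one_var_to_tl (σ : Type) (e : EAForm σ 0) :
    (∃ A : TL σ, ∀ (T : Type) [LinearOrder T] (I : σ → Set T) (t : T),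
        e.sat I (fun _ => t) ↔ A.sat I t) ∧
    (∀ (T : Type) [LinearOrder T] (I : σ → Set T) (t : T),
        e.sat I (fun _ => t) ↔ (e.futureTL.sat I t ∧ e.pastTL.sat I t)) := by
  have key : ∀ (T : Type) [LinearOrder T] (I : σ → Set T) (t : T),
      e.sat I (fun _ => t) ↔ (e.futureTL.sat I t ∧ e.pastTL.sat I t) := by
    intro T _ I t
    rw [e.sat_iff_exists_chainOn, e.sat_futureTL_iff, e.sat_pastTL_iff,
      ← exists_chainOn_glue (Nat.lt_succ_iff.1 (e.idx 0).isLt) t (fun s => ∀ y < s, e.βlo.sat I y)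
        (fun s => ∀ y, s < y → e.βhi.sat I y)]
    refine exists_congr fun x => and_congr_left' ⟨fun h => (h 0).symm, fun h k => ?_⟩
    rw [Fin.fin_one_eq_zero k, h]
  exact ⟨⟨e.futureTL.and e.pastTL, key⟩, key⟩
end

section
/- For every n ≥ 1 and unary predicates P₁,…,P_n, the negation ¬∃x₁…∃x_n (z₀ < x₁ < … < x_n < z₁ ∧ ⋀_{i=1}^n P_i(x_i)) is equivalent over Dedekind complete chains (expanded by all TL(U,S)-definable predicates) to a disjunction of ∃∀-formulas in the expanded signature. -/
/-! Over a Dedekind complete chain a missing chain `P₀ < … < P_n` in `(z₀, z₁)` is explained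
greedily: let `c` be the infimum of the `P₀`-points of `(z₀, z₁)` together with `z₁`. Then
`(z₀, c)` contains no `P₀`-point, and a `P₁ < … < P_n` chain in `(c, z₁)` would extend to the
left by a `P₀`-point just above `c`. Recursing gives a partition `z₀ = x₀ < … < x_m = z₁` whose
`j`-th open block avoids `P_{g j}` for some strictly increasing `g`. Conversely such a partition
rules out a chain `y₀ < … < y_n`: inductively `y_{g j}` lies beyond the `j`-th block, so the
last one lies beyond `z₁`. For each of the finitely many `g` the partition is an ∃∀-formula,
already in the atomic predicates of the expansion; one more formula covers `z₁ < z₀`. -/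

section Chains

variable {T : Type} [LinearOrder T]

def HasChain {N : ℕ} (A : Fin N → Set T) (a b : T) : Prop :=
  ∃ x : Fin N → T, StrictMono x ∧ (∀ i, a < x i ∧ x i < b) ∧ ∀ i, x i ∈ A i

def HasBlockingPartition {N : ℕ} (A : Fin N → Set T) (a b : T) : Prop :=
  ∃ m, ∃ g : Fin m → Fin N, StrictMono g ∧
    ∃ x : Fin (m + 1) → T, StrictMono x ∧ x 0 = a ∧ x (Fin.last m) = b ∧
      ∀ j y, x j.castSucc < y → y < x j.succ → y ∉ A (g j)

theorem HasChain.lt {n : ℕ} {A : Fin (n + 1) → Set T} {a b : T} (h : HasChain A a b) :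
    a < b :=
  let ⟨_, _, hx, _⟩ := h
  (hx 0).1.trans (hx 0).2

theorem hasBlockingPartition_self {N : ℕ} (A : Fin N → Set T) (a : T) :
    HasBlockingPartition A a a :=
  ⟨0, Fin.elim0, fun i => i.elim0, fun _ => a, Fin.strictMono_iff_lt_succ.2 fun i => i.elim0,
    rfl, rfl, fun j => j.elim0⟩

theorem HasBlockingPartition.cons {N : ℕ} {A : Fin (N + 1) → Set T} {a c b : T} (hac : a ≤ c)
    (hgap : ∀ y, a < y → y < c → y ∉ A 0) (h : HasBlockingPartition (Fin.tail A) c b) :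
    HasBlockingPartition A a b := by
  obtain ⟨m, g, hg, x, hx, hx0, hxm, hxgap⟩ := h
  rcases hac.eq_or_lt with rfl | hac
  · exact ⟨m, Fin.succ ∘ g, Fin.strictMono_succ.comp hg, x, hx, hx0, hxm, hxgap⟩
  refine ⟨m + 1, Fin.cons 0 (Fin.succ ∘ g), ?_, Fin.cons a x, ?_, rfl, ?_, ?_⟩
  · exact Fin.strictMono_cons.2 ⟨fun j => Fin.succ_pos _, Fin.strictMono_succ.comp hg⟩
  · exact Fin.strictMono_cons.2 ⟨fun j => hac.trans_le (hx0 ▸ hx.monotone (Fin.zero_le j)), hx⟩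
  · rw [← Fin.succ_last, Fin.cons_succ, hxm]
  · refine Fin.cases ?_ fun j => ?_
    · simpa [← hx0] using hgap
    · simpa [← Fin.succ_castSucc, Fin.tail] using hxgap j

theorem exists_gap_of_dedekindComplete (hT : DedekindComplete T) (A₀ : Set T) {a b : T}
    (hab : a ≤ b) :
    ∃ c, a ≤ c ∧ c ≤ b ∧ (∀ y, a < y → y < c → y ∉ A₀) ∧
      ∀ y, c < y → y ≤ b → ∃ x ∈ A₀, a < x ∧ x < y := by
  set S := insert b (Set.Ioo a b ∩ A₀)
  have ha : a ∈ lowerBounds S := by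
    rintro y (rfl | ⟨⟨hy, -⟩, -⟩) <;> [exact hab; exact hy.le]
  obtain ⟨c, hc⟩ := hT.2 S (Set.insert_nonempty _ _) ⟨a, ha⟩
  refine ⟨c, hc.2 ha, hc.1 (Set.mem_insert _ _), fun y hay hyc hy => ?_, fun y hcy hyb => ?_⟩
  · exact hyc.not_ge (hc.1 (Or.inr ⟨⟨hay, hyc.trans_le (hc.1 (Set.mem_insert _ _))⟩, hy⟩))
  · obtain ⟨x, (rfl | ⟨⟨hax, -⟩, hx⟩), -, hxy⟩ := hc.exists_between hcy
    · exact absurd hyb hxy.not_ge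
    · exact ⟨x, hx, hax, hxy⟩

theorem hasBlockingPartition_of_not_hasChain (hT : DedekindComplete T) :
    ∀ {n : ℕ} (A : Fin (n + 1) → Set T) {a b : T}, a ≤ b → ¬HasChain A a b →
      HasBlockingPartition A a b
  | n, A, a, b, hab, hA => by
    obtain ⟨c, hac, hcb, hgap, hnext⟩ := exists_gap_of_dedekindComplete hT (A 0) hab
    refine HasBlockingPartition.cons hac hgap ?_
    cases n with
    | zero =>
      obtain rfl : c = b := hcb.antisymm <| not_lt.1 fun hcb => by
        obtain ⟨x, hx, hax, hxb⟩ := hnext b hcb le_rfl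
        exact hA ⟨fun _ => x, Fin.strictMono_iff_lt_succ.2 fun i => i.elim0,
          fun _ => ⟨hax, hxb⟩, fun i => Fin.fin_one_eq_zero i ▸ hx⟩
      exact hasBlockingPartition_self _ _
    | succ n =>
      refine hasBlockingPartition_of_not_hasChain hT (Fin.tail A) hcb ?_
      rintro ⟨x, hx, hxab, hxA⟩
      obtain ⟨x₀, hx₀, hax₀, hx₀x⟩ := hnext (x 0) (hxab 0).1 (hxab 0).2.le
      refine hA ⟨Fin.cons x₀ x, Fin.strictMono_cons.2 ⟨fun j => ?_, hx⟩, Fin.cases ?_ ?_,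
        Fin.cases hx₀ hxA⟩
      · exact hx₀x.trans_le (hx.monotone (Fin.zero_le j))
      · exact ⟨hax₀, hx₀x.trans (hxab 0).2⟩
      · exact fun i => ⟨hac.trans_lt (hxab i).1, (hxab i).2⟩

theorem HasBlockingPartition.not_hasChain {n : ℕ} {A : Fin (n + 1) → Set T} {a b : T}
    (h : HasBlockingPartition A a b) : ¬HasChain A a b := by
  obtain ⟨m, g, hg, x', hx', hx'0, hx'm, hgap⟩ := h
  rintro ⟨x, hx, hxab, hxA⟩
  have hstep : ∀ j, x' j.castSucc < x (g j) → x' j.succ ≤ x (g j) := fun j hlt =>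
    not_lt.1 fun hgt => hgap j _ hlt hgt (hxA _)
  cases m with
  | zero => exact (hxab 0).1.not_ge (hx'0 ▸ hx'm ▸ (hxab 0).2.le)
  | succ m =>
    have hpush : ∀ j : Fin (m + 1), x' j.succ ≤ x (g j) := by
      intro j
      induction j using Fin.induction with
      | zero => exact hstep 0 (hx'0 ▸ (hxab _).1)
      | succ j ih =>
        refine hstep _ ?_
        rw [← Fin.succ_castSucc]
        exact ih.trans_lt (hx (hg j.castSucc_lt_succ))
    exact (hxab _).2.not_ge (hx'm ▸ hpush (Fin.last m))

theorem not_hasChain_iff (hT : DedekindComplete T) {n : ℕ} (A : Fin (n + 1) → Set T)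
    {a b : T} (hab : a ≤ b) : ¬HasChain A a b ↔ HasBlockingPartition A a b :=
  ⟨hasBlockingPartition_of_not_hasChain hT A hab, HasBlockingPartition.not_hasChain⟩

end Chains

section Forms

variable {σ : Type}

def gtForm (σ : Type) : EAForm σ 1 where
  n := 1
  idx := ![1, 0]
  α _ := .tt
  βmid _ := .tt
  βlo := .tt
  βhi := .tt

def blockingForm {N m : ℕ} (P : Fin N → σ) (g : Fin m → Fin N) : EAForm (TL σ) 1 where
  n := m
  idx := ![0, Fin.last m]
  α _ := .tt
  βmid j := .neg (.atom (.atom (P (g j))))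
  βlo := .tt
  βhi := .tt

open Classical in
noncomputable def negChainForms {N : ℕ} (P : Fin N → σ) : List (EAForm (TL σ) 1) :=
  gtForm (TL σ) ::
    (Finset.univ : Finset (Σ m : Fin (N + 1), {g : Fin m → Fin N // StrictMono g})).toList.map
      fun g => blockingForm P g.2.1

variable {T : Type} [LinearOrder T]

theorem gtForm_sat (I : σ → Set T) (z : Fin 2 → T) : (gtForm σ).sat I z ↔ z 1 < z 0 := by
  constructor
  · rintro ⟨x, hx, hxz, -⟩
    rw [hxz 0, hxz 1]
    exact hx (show (0 : Fin 2) < 1 by decide)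
  · intro h
    refine ⟨![z 1, z 0], ?_, ?_, fun _ => trivial, fun _ _ _ _ => trivial, fun _ _ => trivial,
      fun _ _ => trivial⟩
    · show StrictMono ![z 1, z 0]
      simpa using h
    · simp [Fin.forall_fin_two, gtForm]

theorem blockingForm_sat {N m : ℕ} (P : Fin N → σ) (g : Fin m → Fin N) (I : σ → Set T)
    (z : Fin 2 → T) :
    (blockingForm P g).sat (canonExp I) z ↔ ∃ x : Fin (m + 1) → T, StrictMono x ∧
      x 0 = z 0 ∧ x (Fin.last m) = z 1 ∧
        ∀ j y, x j.castSucc < y → y < x j.succ → y ∉ I (P (g j)) := by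
  constructor
  · rintro ⟨x, hx, hxz, -, hgap, -⟩
    exact ⟨x, hx, (hxz 0).symm, (hxz 1).symm, hgap⟩
  · rintro ⟨x, hx, hx0, hxm, hgap⟩
    exact ⟨x, hx, Fin.forall_fin_two.2 ⟨hx0.symm, hxm.symm⟩, fun _ => trivial, hgap,
      fun _ _ => trivial, fun _ _ => trivial⟩

theorem eaDisj_negChainForms_iff {N : ℕ} (P : Fin N → σ) (I : σ → Set T) (z : Fin 2 → T) :
    EADisj (negChainForms P) (canonExp I) z ↔
      z 1 < z 0 ∨ HasBlockingPartition (fun i => I (P i)) (z 0) (z 1) := by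
  simp only [EADisj, negChainForms, List.mem_cons, List.mem_map, Finset.mem_toList,
    Finset.mem_univ, true_and]
  constructor
  · rintro ⟨f, rfl | ⟨⟨m, g, hg⟩, rfl⟩, hf⟩
    · exact Or.inl ((gtForm_sat _ z).1 hf)
    · exact Or.inr ⟨m, g, hg, (blockingForm_sat P g I z).1 hf⟩
  · rintro (h | ⟨m, g, hg, hx⟩)
    · exact ⟨_, Or.inl rfl, (gtForm_sat _ z).2 h⟩
    · have hm : m < N + 1 := Nat.lt_succ_of_le (Fin.le_of_injective g hg.injective)
      exact ⟨_, Or.inr ⟨⟨⟨m, hm⟩, g, hg⟩, rfl⟩, (blockingForm_sat P g I z).2 hx⟩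

end Forms

/-- for n ≥ 1, the negation of ∃x₁…∃x_n (z₀ < x₁ < … < x_n < z₁ ∧ ⋀ P_i(x_i))
is equivalent over Dedekind complete chains, in the canonical TL(U,S)-expansion, to a
disjunction of ∃∀-formulas in the expanded signature. -/
theorem neg_occurrence_chain (σ : Type) (n : ℕ) (P : Fin (n + 1) → σ) :
    ∃ L : List (EAForm (TL σ) 1),
      ∀ (T : Type) [LinearOrder T], DedekindComplete T →
        ∀ (I : σ → Set T) (z : Fin 2 → T),
          ((¬ ∃ x : Fin (n + 1) → T, StrictMono x ∧
              (∀ i, z 0 < x i ∧ x i < z 1) ∧ (∀ i, x i ∈ I (P i))) ↔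
            EADisj L (canonExp I) z) := by
  refine ⟨negChainForms P, fun T _ hT I z => ?_⟩
  change ¬HasChain (fun i => I (P i)) (z 0) (z 1) ↔ _
  rw [eaDisj_negChainForms_iff]
  rcases lt_or_ge (z 1) (z 0) with hz | hz
  · exact iff_of_true (fun h => h.lt.asymm hz) (Or.inl hz)
  · rw [not_hasChain_iff hT _ hz, or_iff_right hz.not_gt]
end

section
/- Every syntactically future TL(U,K⁻) formula is a future formula: for every chain M and point t₀, M,t₀ ⊨ F iff M|_{≥t₀}, t₀ ⊨ F, where M|_{≥t₀} is the subchain of M restricted to [t₀,∞). -/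
lemma tlk_sat_restrict {σ T : Type} [LinearOrder T] (I : σ → Set T) (t₀ : T)
    (F : TLK σ) : ∀ (s : T) (h : t₀ < s),
      F.sat I s ↔ F.sat (restrictI I t₀) ⟨s, h.le⟩ := by
  induction F with
  | tt => intro s h; simp [TLK.sat]
  | atom p => intro s h; simp [TLK.sat, restrictI]
  | neg F ih => intro s h; simp [TLK.sat, ih s h]
  | or F G ihF ihG => intro s h; simp [TLK.sat, ihF s h, ihG s h]
  | and F G ihF ihG => intro s h; simp [TLK.sat, ihF s h, ihG s h]
  | until_ F G ihF ihG =>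
    intro s h
    constructor
    · rintro ⟨t', hst, hG, hmid⟩
      refine ⟨⟨t', (h.trans hst).le⟩, hst, (ihG t' (h.trans hst)).1 hG, ?_⟩
      rintro ⟨u, hu⟩ h1 h2
      have h1' : s < u := h1
      exact (ihF u (h.trans h1')).1 (hmid u h1' h2)
    · rintro ⟨⟨t', ht'⟩, hst, hG, hmid⟩
      have hst' : s < t' := hst
      refine ⟨t', hst', (ihG t' (h.trans hst')).2 hG, ?_⟩
      intro u h1 h2
      have := hmid ⟨u, (h.trans h1).le⟩ h1 h2
      exact (ihF u (h.trans h1)).2 this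
  | kminus F ih =>
    intro s h
    show IsLUB {t' | t' < s ∧ F.sat I t'} s ↔
      IsLUB {t' | t' < (⟨s, h.le⟩ : {t : T // t₀ ≤ t}) ∧ F.sat (restrictI I t₀) t'} _
    constructor
    · intro hl
      constructor
      · rintro ⟨u, hu⟩ ⟨h1, _⟩
        exact le_of_lt h1
      · rintro ⟨u, hu⟩ hub
        by_contra hcon
        have hus : u < s := by
          simpa [Subtype.mk_lt_mk] using lt_of_not_ge hcon
        have hex : ∃ t', (t' < s ∧ F.sat I t') ∧ u < t' := by
          by_contra hc
          push_neg at hc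
          have : u ∈ upperBounds {t' | t' < s ∧ F.sat I t'} := by
            intro a ha; exact hc a ha
          exact absurd (hl.2 this) (not_le.mpr hus)
        obtain ⟨t', ⟨hts, hFt⟩, hut⟩ := hex
        have ht0 : t₀ < t' := lt_of_le_of_lt hu hut
        have hmem : (⟨t', ht0.le⟩ : {t : T // t₀ ≤ t}) ∈
            {t' | t' < (⟨s, h.le⟩ : {t : T // t₀ ≤ t}) ∧ F.sat (restrictI I t₀) t'} :=
          ⟨hts, (ih t' ht0).1 hFt⟩
        have := hub hmem
        exact absurd hut (not_lt.mpr this)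
    · intro hl
      constructor
      · rintro u ⟨h1, _⟩
        exact le_of_lt h1
      · intro u hub
        by_contra hcon
        have hus : u < s := lt_of_not_ge hcon
        -- find a point of the restricted set above max u t₀
        have hmax : (⟨max u t₀ ⊔ t₀, le_sup_right⟩ : {t : T // t₀ ≤ t}) = _ := rfl
        set v : {t : T // t₀ ≤ t} := ⟨max u t₀, le_max_right u t₀⟩ with hv
        have hvs : v < (⟨s, h.le⟩ : {t : T // t₀ ≤ t}) := by
          show max u t₀ < s
          exact max_lt hus h
        have hex : ∃ t' ∈ {t' | t' < (⟨s, h.le⟩ : {t : T // t₀ ≤ t}) ∧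
            F.sat (restrictI I t₀) t'}, v < t' := by
          by_contra hc
          push_neg at hc
          have : v ∈ upperBounds {t' | t' < (⟨s, h.le⟩ : {t : T // t₀ ≤ t}) ∧
              F.sat (restrictI I t₀) t'} := fun a ha => hc a ha
          exact absurd (hl.2 this) (not_le.mpr hvs)
        obtain ⟨⟨t', ht'⟩, ⟨hts, hFt⟩, hvt⟩ := hex
        have hvt' : max u t₀ < t' := hvt
        have ht0 : t₀ < t' := lt_of_le_of_lt (le_max_right u t₀) hvt'
        have hts' : t' < s := hts
        have hFt' : F.sat I t' := (ih t' ht0).2 (by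
          convert hFt)
        have := hub ⟨hts', hFt'⟩
        exact absurd (lt_of_le_of_lt (le_max_left u t₀) hvt') (not_lt.mpr this)

/-- every syntactically future TL(U,K⁻) formula is future: its truth at
t₀ in M coincides with its truth at t₀ in the subchain M restricted to [t₀,∞). -/
theorem synfuture_is_future (σ : Type) (F : TLK σ) (hF : SynFuture F) :
    ∀ (T : Type) [LinearOrder T] (I : σ → Set T) (t₀ : T),
      F.sat I t₀ ↔ F.sat (restrictI I t₀) ⟨t₀, le_refl t₀⟩ := by
  induction hF with
  | tt => intro T _ I t₀; simp [TLK.sat]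
  | atom p => intro T _ I t₀; simp [TLK.sat, restrictI]
  | neg _ ih => intro T _ I t₀; simp [TLK.sat, ih T I t₀]
  | or _ _ ihF ihG => intro T _ I t₀; simp [TLK.sat, ihF T I t₀, ihG T I t₀]
  | and _ _ ihF ihG => intro T _ I t₀; simp [TLK.sat, ihF T I t₀, ihG T I t₀]
  | until_ F G =>
    intro T _ I t₀
    constructor
    · rintro ⟨t', hst, hG, hmid⟩
      refine ⟨⟨t', hst.le⟩, hst, (tlk_sat_restrict I t₀ G t' hst).1 hG, ?_⟩
      rintro ⟨u, hu⟩ h1 h2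
      have h1' : t₀ < u := h1
      exact (tlk_sat_restrict I t₀ F u h1').1 (hmid u h1' h2)
    · rintro ⟨⟨t', ht'⟩, hst, hG, hmid⟩
      have hst' : t₀ < t' := hst
      refine ⟨t', hst', (tlk_sat_restrict I t₀ G t' hst').2 hG, ?_⟩
      intro u h1 h2
      exact (tlk_sat_restrict I t₀ F u h1).2 (hmid ⟨u, h1.le⟩ h1 h2)
end
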